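/- arXiv:physics/0607060 — 3 statements merged into one kernel-verified Lean document; each statement's English description precedes it below -/
import Mathlib

section
/- If u is a weak solution of the inviscid sabra shell model in L¹([0,T], w^{1,∞}) ∩ L^∞([0,T], V_{1/3}) and v is any weak solution in L^∞([0,T], V_{1/3}) with v(0) = u(0), then u = v on [0,T] (weak-strong uniqueness). -/
open Complex MeasureTheory

/-- Wavenumbers of the sabra shell model: `k n = k0 * λ^n`. -/
noncomputable def kk (k0 lam : ℝ) (n : ℤ) : ℝ := k0 * lam ^ n

/-- Nonlinear term of the sabra shell model. -/
noncomputable def sB (a b c k0 lam : ℝ) (u : ℤ → ℂ) (n : ℤ) : ℂ :=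
  -Complex.I * ((a : ℂ) * (kk k0 lam (n + 1) : ℝ) * u (n + 2) * (starRingEnd ℂ) (u (n + 1))
    + (b : ℂ) * (kk k0 lam n : ℝ) * u (n + 1) * (starRingEnd ℂ) (u (n - 1))
    - (c : ℂ) * (kk k0 lam (n - 1) : ℝ) * u (n - 1) * u (n - 2))

/-- Membership in `V = D(A^{1/2})` (test functions): zero boundary components and
`∑ k_n² |v_n|² < ∞`. -/
def InTestV (k0 lam : ℝ) (v : ℤ → ℂ) : Prop :=
  (∀ n : ℤ, n ≤ 0 → v n = 0) ∧
  Summable fun n : ℕ => (kk k0 lam ((n : ℤ) + 1)) ^ 2 * ‖v ((n : ℤ) + 1)‖ ^ 2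

/-- A weak solution of the forced inviscid sabra shell model on `[0,T]`:
`u ∈ L^∞([0,T],H) ∩ C([0,T],H_w)` (componentwise continuity plus a uniform ℓ² bound)
satisfying `⟨u(t),v⟩ + ∫₀ᵗ ⟨B(u(s),u(s)),v⟩ ds = ⟨u^{in},v⟩ + t⟨f,v⟩` for all `v ∈ V`. -/
def IsWeakSolution (a b c k0 lam T : ℝ) (uin f : ℤ → ℂ) (u : ℝ → ℤ → ℂ) : Prop :=
  (∀ t : ℝ, ∀ n : ℤ, n ≤ 0 → u t n = 0) ∧
  (∃ M : ℝ, ∀ t ∈ Set.Icc (0 : ℝ) T,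
    (Summable fun n : ℕ => ‖u t ((n : ℤ) + 1)‖ ^ 2) ∧
    (∑' n : ℕ, ‖u t ((n : ℤ) + 1)‖ ^ 2) ≤ M) ∧
  (∀ n : ℤ, ContinuousOn (fun t => u t n) (Set.Icc (0 : ℝ) T)) ∧
  (∀ v : ℤ → ℂ, InTestV k0 lam v → ∀ t ∈ Set.Icc (0 : ℝ) T,
    (∑' n : ℕ, u t ((n : ℤ) + 1) * (starRingEnd ℂ) (v ((n : ℤ) + 1))) +
      (∫ s in (0 : ℝ)..t,
        ∑' n : ℕ, sB a b c k0 lam (u s) ((n : ℤ) + 1) * (starRingEnd ℂ) (v ((n : ℤ) + 1))) =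
    (∑' n : ℕ, uin ((n : ℤ) + 1) * (starRingEnd ℂ) (v ((n : ℤ) + 1))) +
      (t : ℂ) * (∑' n : ℕ, f ((n : ℤ) + 1) * (starRingEnd ℂ) (v ((n : ℤ) + 1))))


/-- The `w^{1,∞}` norm `sup_n k_n |u_n|`. -/
noncomputable def W1 (k0 lam : ℝ) (v : ℤ → ℂ) : ℝ :=
  ⨆ n : ℕ, kk k0 lam ((n : ℤ) + 1) * ‖v ((n : ℤ) + 1)‖

/-- `u ∈ L^∞([0,T], V_{1/3})`. -/
def LinftyV13 (k0 lam T : ℝ) (u : ℝ → ℤ → ℂ) : Prop :=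
  ∃ M : ℝ, ∀ t ∈ Set.Icc (0 : ℝ) T,
    (Summable fun n : ℕ =>
      (kk k0 lam ((n : ℤ) + 1)) ^ ((2 : ℝ) / 3) * ‖u t ((n : ℤ) + 1)‖ ^ 2) ∧
    (∑' n : ℕ, (kk k0 lam ((n : ℤ) + 1)) ^ ((2 : ℝ) / 3) * ‖u t ((n : ℤ) + 1)‖ ^ 2) ≤ M

section Helpers

variable {a b c k0 lam : ℝ}

lemma kk_pos (hk0 : 0 < k0) (hlam : 1 < lam) (m : ℤ) : 0 < kk k0 lam m := by
  have : (0:ℝ) < lam := lt_trans one_pos hlam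
  exact mul_pos hk0 (zpow_pos this m)

lemma kk_succ (hlam : 1 < lam) (m : ℤ) : kk k0 lam (m + 1) = lam * kk k0 lam m := by
  have hl : (lam:ℝ) ≠ 0 := ne_of_gt (lt_trans one_pos hlam)
  simp [kk, zpow_add₀ hl]
  ring

/-- mixed part of the difference of nonlinearities -/
noncomputable def Rterm (a b c k0 lam : ℝ) (U W : ℤ → ℂ) (m : ℤ) : ℂ :=
  -Complex.I * ((a : ℂ) * (kk k0 lam (m + 1) : ℝ) *
      (W (m + 2) * (starRingEnd ℂ) (U (m + 1)) + U (m + 2) * (starRingEnd ℂ) (W (m + 1)))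
    + (b : ℂ) * (kk k0 lam m : ℝ) *
      (W (m + 1) * (starRingEnd ℂ) (U (m - 1)) + U (m + 1) * (starRingEnd ℂ) (W (m - 1)))
    - (c : ℂ) * (kk k0 lam (m - 1) : ℝ) *
      (W (m - 1) * U (m - 2) + U (m - 1) * W (m - 2)))

lemma sB_decomp (a b c k0 lam : ℝ) (U V : ℤ → ℂ) (m : ℤ) :
    sB a b c k0 lam U m - sB a b c k0 lam V m
      = Rterm a b c k0 lam U (fun j => U j - V j) m
        - sB a b c k0 lam (fun j => U j - V j) m := by
  simp only [sB, Rterm, map_sub]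
  ring

/-- flux quantity -/
noncomputable def Fw (k0 lam : ℝ) (W : ℤ → ℂ) (m : ℤ) : ℝ :=
  kk k0 lam (m + 1) * (W (m + 2) * (starRingEnd ℂ) (W (m + 1)) * (starRingEnd ℂ) (W m)).im

lemma sB_flux (a b c k0 lam : ℝ) (W : ℤ → ℂ) (m : ℤ) :
    (sB a b c k0 lam W m * (starRingEnd ℂ) (W m)).re
      = a * Fw k0 lam W m + b * Fw k0 lam W (m - 1) + c * Fw k0 lam W (m - 2) := by
  have h1 : m - 1 + 1 = m := by ring
  have h2 : m - 1 + 2 = m + 1 := by ring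
  have h3 : m - 2 + 1 = m - 1 := by ring
  have h4 : m - 2 + 2 = m := by ring
  simp only [sB, Fw, h1, h2, h3, h4, Complex.mul_re, Complex.mul_im, Complex.conj_re,
    Complex.conj_im, Complex.I_re, Complex.I_im, Complex.ofReal_re, Complex.ofReal_im,
    Complex.add_re, Complex.add_im, Complex.sub_re, Complex.sub_im, Complex.neg_re,
    Complex.neg_im]
  ring

end Helpers
section ModeEq

/-- delta test function -/
noncomputable def eDelta (m : ℕ) : ℤ → ℂ := fun j => if j = (m : ℤ) + 1 then 1 else 0

lemma eDelta_testV (k0 lam : ℝ) (m : ℕ) : InTestV k0 lam (eDelta m) := by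
  constructor
  · intro n hn
    have : n ≠ (m : ℤ) + 1 := by omega
    simp [eDelta, this]
  · apply summable_of_ne_finset_zero (s := {m})
    intro n hn
    simp only [Finset.mem_singleton] at hn
    have : ((n : ℤ) + 1) ≠ ((m : ℤ) + 1) := by
      intro h; exact hn (by exact_mod_cast (by omega : (n:ℤ) = (m:ℤ)))
    simp [eDelta, this]

lemma tsum_delta (g : ℤ → ℂ) (m : ℕ) :
    (∑' n : ℕ, g ((n : ℤ) + 1) * (starRingEnd ℂ) (eDelta m ((n : ℤ) + 1))) = g ((m : ℤ) + 1) := by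
  have h : ∀ n : ℕ, g ((n : ℤ) + 1) * (starRingEnd ℂ) (eDelta m ((n : ℤ) + 1))
      = if n = m then g ((m : ℤ) + 1) else 0 := by
    intro n
    by_cases h : n = m
    · subst h; simp [eDelta]
    · have : ((n : ℤ) + 1) ≠ ((m : ℤ) + 1) := by
        intro hh; exact h (by exact_mod_cast (by omega : (n:ℤ) = (m:ℤ)))
      simp [eDelta, this, h]
  rw [tsum_congr h, tsum_ite_eq]

lemma mode_eq {a b c k0 lam T : ℝ} {uin f : ℤ → ℂ} {u : ℝ → ℤ → ℂ}
    (hu : IsWeakSolution a b c k0 lam T uin f u) (m : ℕ) {t : ℝ}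
    (ht : t ∈ Set.Icc (0 : ℝ) T) :
    u t ((m : ℤ) + 1) + (∫ s in (0:ℝ)..t, sB a b c k0 lam (u s) ((m : ℤ) + 1))
      = uin ((m : ℤ) + 1) + (t : ℂ) * f ((m : ℤ) + 1) := by
  have h := hu.2.2.2 (eDelta m) (eDelta_testV k0 lam m) t ht
  rw [tsum_delta (u t) m, tsum_delta uin m, tsum_delta f m] at h
  have hfun : (fun s => ∑' n : ℕ,
      sB a b c k0 lam (u s) ((n : ℤ) + 1) * (starRingEnd ℂ) (eDelta m ((n : ℤ) + 1)))
      = fun s => sB a b c k0 lam (u s) ((m : ℤ) + 1) := by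
    funext s; exact tsum_delta (fun j => sB a b c k0 lam (u s) j) m
  rw [hfun] at h
  exact h

lemma continuousOn_sB {a b c k0 lam T : ℝ} {u : ℝ → ℤ → ℂ}
    (hc : ∀ n : ℤ, ContinuousOn (fun t => u t n) (Set.Icc (0 : ℝ) T)) (m : ℤ) :
    ContinuousOn (fun s => sB a b c k0 lam (u s) m) (Set.Icc (0 : ℝ) T) := by
  simp only [sB]
  have hconj : ∀ j : ℤ, ContinuousOn (fun s => (starRingEnd ℂ) (u s j)) (Set.Icc (0:ℝ) T) :=
    fun j => Complex.continuous_conj.comp_continuousOn (hc j)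
  fun_prop

end ModeEq
section Shifts

lemma summable_shift_up (g : ℤ → ℝ) (d : ℕ)
    (hs : Summable fun n : ℕ => g ((n : ℤ) + 1)) :
    Summable fun n : ℕ => g ((n : ℤ) + 1 + (d : ℤ)) := by
  have h : (fun n : ℕ => g ((n : ℤ) + 1 + (d : ℤ)))
      = fun n : ℕ => g (((n + d : ℕ) : ℤ) + 1) := by
    funext n; congr 1; push_cast; ring
  rw [h]
  exact (summable_nat_add_iff d).mpr hs

lemma tsum_shift_up_le (g : ℤ → ℝ) (hnn : ∀ j, 0 ≤ g j) (d : ℕ)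
    (hs : Summable fun n : ℕ => g ((n : ℤ) + 1)) :
    (∑' n : ℕ, g ((n : ℤ) + 1 + (d : ℤ))) ≤ ∑' n : ℕ, g ((n : ℤ) + 1) := by
  refine Summable.tsum_le_tsum_of_inj (fun n => n + d) (add_left_injective d)
    (fun c _ => hnn _) (fun n => le_of_eq (by congr 1; push_cast; ring))
    (summable_shift_up g d hs) hs

lemma summable_shift_dn (g : ℤ → ℝ) (d : ℕ)
    (hs : Summable fun n : ℕ => g ((n : ℤ) + 1)) :
    Summable fun n : ℕ => g ((n : ℤ) + 1 - (d : ℤ)) := by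
  refine (summable_nat_add_iff d).mp ?_
  have h : (fun n : ℕ => g (((n + d : ℕ) : ℤ) + 1 - (d : ℤ)))
      = fun n : ℕ => g ((n : ℤ) + 1) := by
    funext n; congr 1; push_cast; ring
  exact h ▸ hs

lemma tsum_shift_dn (g : ℤ → ℝ) (hg0 : ∀ j ≤ 0, g j = 0) (d : ℕ)
    (hs : Summable fun n : ℕ => g ((n : ℤ) + 1)) :
    (∑' n : ℕ, g ((n : ℤ) + 1 - (d : ℤ))) = ∑' n : ℕ, g ((n : ℤ) + 1) := by
  have hsum := summable_shift_dn g d hs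
  have h := Summable.sum_add_tsum_nat_add (f := fun n : ℕ => g ((n : ℤ) + 1 - (d : ℤ))) d hsum
  have hz : (∑ i ∈ Finset.range d, g ((i : ℤ) + 1 - (d : ℤ))) = 0 := by
    apply Finset.sum_eq_zero
    intro i hi
    have : (i : ℤ) + 1 - (d : ℤ) ≤ 0 := by
      have := Finset.mem_range.mp hi; omega
    exact hg0 _ this
  have htail : (fun n : ℕ => g (((n + d : ℕ) : ℤ) + 1 - (d : ℤ)))
      = fun n : ℕ => g ((n : ℤ) + 1) := by
    funext n; congr 1; push_cast; ring
  rw [hz, zero_add] at h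
  rw [← h]
  exact congrArg tsum htail ▸ rfl

end Shifts

section FluxSum

lemma flux_tsum_zero {a b c k0 lam : ℝ} (habc : a + b + c = 0) (W : ℤ → ℂ)
    (hW0 : ∀ j ≤ 0, W j = 0)
    (habs : Summable fun n : ℕ => |Fw k0 lam W ((n : ℤ) + 1)|) :
    (∑' n : ℕ, (sB a b c k0 lam W ((n : ℤ) + 1) * (starRingEnd ℂ) (W ((n : ℤ) + 1))).re) = 0 := by
  set F := Fw k0 lam W with hF
  have hF0 : ∀ j ≤ 0, F j = 0 := by
    intro j hj
    simp [hF, Fw, hW0 j hj]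
  have hs : Summable fun n : ℕ => F ((n : ℤ) + 1) := habs.of_abs
  have hs1 : Summable fun n : ℕ => F ((n : ℤ) + 1 - (1 : ℤ)) := by
    exact_mod_cast summable_shift_dn F 1 hs
  have hs2 : Summable fun n : ℕ => F ((n : ℤ) + 1 - (2 : ℤ)) := by
    exact_mod_cast summable_shift_dn F 2 hs
  have ht1 : (∑' n : ℕ, F ((n : ℤ) + 1 - (1 : ℤ))) = ∑' n : ℕ, F ((n : ℤ) + 1) := by
    exact_mod_cast tsum_shift_dn F hF0 1 hs
  have ht2 : (∑' n : ℕ, F ((n : ℤ) + 1 - (2 : ℤ))) = ∑' n : ℕ, F ((n : ℤ) + 1) := by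
    exact_mod_cast tsum_shift_dn F hF0 2 hs
  have hrw : (fun n : ℕ => (sB a b c k0 lam W ((n : ℤ) + 1)
        * (starRingEnd ℂ) (W ((n : ℤ) + 1))).re)
      = fun n : ℕ => a * F ((n : ℤ) + 1) + (b * F ((n : ℤ) + 1 - 1)
        + c * F ((n : ℤ) + 1 - 2)) := by
    funext n
    rw [sB_flux a b c k0 lam W ((n : ℤ) + 1)]
    ring
  rw [hrw, Summable.tsum_add ((hs.mul_left a)) ((hs1.mul_left b).add (hs2.mul_left c)),
    Summable.tsum_add (hs1.mul_left b) (hs2.mul_left c), tsum_mul_left, tsum_mul_left, tsum_mul_left,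
    ht1, ht2]
  linear_combination (∑' n : ℕ, F ((n : ℤ) + 1)) * habc

end FluxSum
section Gronwall

open MeasureTheory

lemma gronwall_zero (T : ℝ) (y φ : ℝ → ℝ)
    (hy_cont : ContinuousOn y (Set.Icc 0 T))
    (hy_nonneg : ∀ t ∈ Set.Icc (0:ℝ) T, 0 ≤ y t)
    (hφ_int : IntegrableOn φ (Set.Icc 0 T))
    (hφ_nonneg : ∀ s ∈ Set.Icc (0:ℝ) T, 0 ≤ φ s)
    (hineq : ∀ t ∈ Set.Icc (0:ℝ) T, y t ≤ ∫ s in Set.Ioc 0 t, φ s * y s) :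
    ∀ t ∈ Set.Icc (0:ℝ) T, y t = 0 := by
  intro t0 ht0
  have h0T : (0:ℝ) ≤ T := le_trans ht0.1 ht0.2
  -- integrability of φ * y on Icc 0 T
  obtain ⟨C, hC⟩ := (isCompact_Icc (a := (0:ℝ)) (b := T)).exists_bound_of_continuousOn hy_cont
  have hy_meas : AEStronglyMeasurable y (volume.restrict (Set.Icc 0 T)) :=
    hy_cont.aestronglyMeasurable measurableSet_Icc
  have hφy_int : IntegrableOn (fun s => φ s * y s) (Set.Icc 0 T) := by
    refine (((hφ_int.norm.const_mul C)).mono' (hφ_int.aestronglyMeasurable.mul hy_meas) ?_)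
    rw [ae_restrict_iff' measurableSet_Icc]
    refine MeasureTheory.ae_of_all _ (fun s hs => ?_)
    have h1 : ‖y s‖ ≤ C := hC s hs
    have : ‖φ s * y s‖ = ‖φ s‖ * ‖y s‖ := norm_mul _ _
    rw [this]
    have hC0 : 0 ≤ C := le_trans (norm_nonneg _) h1
    calc ‖φ s‖ * ‖y s‖ ≤ ‖φ s‖ * C := by
          exact mul_le_mul_of_nonneg_left h1 (norm_nonneg _)
      _ = C * ‖φ s‖ := by ring
  -- the set A
  set A : Set ℝ := {t | t ∈ Set.Icc (0:ℝ) T ∧ ∀ s ∈ Set.Icc (0:ℝ) t, y s = 0} with hA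
  have hy00 : y 0 = 0 := by
    have h := hineq 0 (Set.left_mem_Icc.mpr h0T)
    rw [Set.Ioc_self] at h
    simp only [Measure.restrict_empty, integral_zero_measure] at h
    exact le_antisymm h (hy_nonneg 0 (Set.left_mem_Icc.mpr h0T))
  have h0A : (0:ℝ) ∈ A := by
    refine ⟨Set.left_mem_Icc.mpr h0T, fun s hs => ?_⟩
    have : s = 0 := le_antisymm hs.2 hs.1
    rw [this]; exact hy00
  have hAne : A.Nonempty := ⟨0, h0A⟩
  have hAbdd : BddAbove A := ⟨T, fun x hx => hx.1.2⟩
  set cc := sSup A with hcc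
  have hc0 : 0 ≤ cc := le_csSup hAbdd h0A
  have hcT : cc ≤ T := csSup_le hAne (fun x hx => hx.1.2)
  have hccIcc : cc ∈ Set.Icc (0:ℝ) T := ⟨hc0, hcT⟩
  -- y vanishes on [0, cc]
  have hyc : ∀ s ∈ Set.Icc (0:ℝ) cc, y s = 0 := by
    have hlt : ∀ s ∈ Set.Ico (0:ℝ) cc, y s = 0 := by
      intro s hs
      obtain ⟨x, hxA, hsx⟩ := exists_lt_of_lt_csSup hAne hs.2
      exact hxA.2 s ⟨hs.1, le_of_lt hsx⟩
    have hycc : y cc = 0 := by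
      have h := hineq cc ⟨hc0, hcT⟩
      have hzero : (∫ x in Set.Ioc 0 cc, φ x * y x) = 0 := by
        rw [MeasureTheory.integral_Ioc_eq_integral_Ioo]
        rw [MeasureTheory.setIntegral_congr_fun measurableSet_Ioo
          (g := fun _ => (0:ℝ)) (fun x hx => by
            rw [hlt x ⟨le_of_lt hx.1, hx.2⟩, mul_zero])]
        simp
      rw [hzero] at h
      exact le_antisymm h (hy_nonneg cc ⟨hc0, hcT⟩)
    intro s hs
    rcases lt_or_eq_of_le hs.2 with h | h
    · exact hlt s ⟨hs.1, h⟩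
    · rw [h]; exact hycc
  -- show cc = T
  have hccT : cc = T := by
    by_contra hne
    have hclt : cc < T := lt_of_le_of_ne hcT hne
    -- choose δ
    have hΦcont := intervalIntegral.continuousOn_primitive (a := 0) (b := T)
      (f := φ) (μ := volume) hφ_int
    have hcw : ContinuousWithinAt (fun x => ∫ s in Set.Ioc 0 x, φ s) (Set.Icc 0 T) cc :=
      hΦcont cc hccIcc
    rw [ContinuousWithinAt, Metric.tendsto_nhdsWithin_nhds] at hcw
    obtain ⟨δ, hδ0, hδ⟩ := hcw (1/2) (by norm_num)
    set d := min (δ/2) (T - cc) with hd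
    have hd0 : 0 < d := lt_min (by linarith) (by linarith)
    set t1 := cc + d with ht1
    have ht1T : t1 ≤ T := by
      have : d ≤ T - cc := min_le_right _ _
      simp [ht1]; linarith
    have ht1Icc : t1 ∈ Set.Icc (0:ℝ) T := ⟨by linarith, ht1T⟩
    have hsplitφ : ∀ x ∈ Set.Icc cc T,
        (∫ s in Set.Ioc 0 x, φ s) = (∫ s in Set.Ioc 0 cc, φ s) + ∫ s in Set.Ioc cc x, φ s := by
      intro x hx
      rw [← MeasureTheory.setIntegral_union (Set.disjoint_left.mpr (fun z hz1 hz2 => absurd hz1.2 (not_le.mpr hz2.1)))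
        measurableSet_Ioc (hφ_int.mono_set (Set.Ioc_subset_Icc_self.trans
          (Set.Icc_subset_Icc le_rfl hcT)))
        (hφ_int.mono_set (fun z hz => ⟨le_trans hc0 (le_of_lt hz.1), le_trans hz.2 hx.2⟩)),
        Set.Ioc_union_Ioc_eq_Ioc hc0 hx.1]
    have hsmall : (∫ s in Set.Ioc cc t1, φ s) < 1/2 := by
      have h1 := hδ ht1Icc (by
        rw [Real.dist_eq]
        have : |t1 - cc| = d := by rw [ht1]; simp [abs_of_pos hd0]
        rw [this]
        calc d ≤ δ/2 := min_le_left _ _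
          _ < δ := by linarith)
      rw [hsplitφ t1 ⟨le_of_lt (by linarith), ht1T⟩] at h1
      rw [Real.dist_eq] at h1
      have := abs_lt.mp h1
      linarith [this.2]
    -- max of y on [cc, t1]
    have hsub : Set.Icc cc t1 ⊆ Set.Icc (0:ℝ) T :=
      Set.Icc_subset_Icc hc0 ht1T
    obtain ⟨xs, hxs, hmax⟩ := (isCompact_Icc (a := cc) (b := t1)).exists_isMaxOn
      ⟨cc, ⟨le_rfl, by linarith⟩⟩ (hy_cont.mono hsub)
    set K := y xs with hK
    have hK0 : 0 ≤ K := hy_nonneg xs (hsub hxs)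
    -- key estimate at any t ∈ [cc, t1]
    have hest : ∀ t ∈ Set.Icc cc t1, y t ≤ K * (1/2) := by
      intro t ht
      have htIcc : t ∈ Set.Icc (0:ℝ) T := hsub ht
      have h := hineq t htIcc
      have hsplit : (∫ s in Set.Ioc 0 t, φ s * y s)
          = (∫ s in Set.Ioc 0 cc, φ s * y s) + ∫ s in Set.Ioc cc t, φ s * y s := by
        rw [← MeasureTheory.setIntegral_union (Set.disjoint_left.mpr (fun z hz1 hz2 => absurd hz1.2 (not_le.mpr hz2.1)))
          measurableSet_Ioc
          (hφy_int.mono_set (fun z hz => ⟨le_of_lt hz.1, le_trans hz.2 hcT⟩))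
          (hφy_int.mono_set (fun z hz => ⟨le_trans hc0 (le_of_lt hz.1), le_trans hz.2 htIcc.2⟩)),
          Set.Ioc_union_Ioc_eq_Ioc hc0 ht.1]
      have hzero1 : (∫ s in Set.Ioc 0 cc, φ s * y s) = 0 := by
        rw [MeasureTheory.setIntegral_congr_fun measurableSet_Ioc
          (g := fun _ => (0:ℝ)) (fun x hx => by
            rw [hyc x ⟨le_of_lt hx.1, hx.2⟩, mul_zero])]
        simp
      have hmono : (∫ s in Set.Ioc cc t, φ s * y s) ≤ ∫ s in Set.Ioc cc t, φ s * K := by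
        refine MeasureTheory.setIntegral_mono_on
          (hφy_int.mono_set (fun z hz => ⟨le_trans hc0 (le_of_lt hz.1), le_trans hz.2 htIcc.2⟩))
          ((hφ_int.mono_set (fun z hz => ⟨le_trans hc0 (le_of_lt hz.1), le_trans hz.2 htIcc.2⟩)).mul_const K)
          measurableSet_Ioc (fun x hx => ?_)
        have hxI : x ∈ Set.Icc (0:ℝ) T :=
          ⟨le_trans hc0 (le_of_lt hx.1), le_trans hx.2 htIcc.2⟩
        have hyK : y x ≤ K := hmax ⟨le_of_lt hx.1, le_trans hx.2 ht.2⟩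
        exact mul_le_mul_of_nonneg_left hyK (hφ_nonneg x hxI)
      have hmono2 : (∫ s in Set.Ioc cc t, φ s * K) ≤ (∫ s in Set.Ioc cc t1, φ s) * K := by
        rw [← MeasureTheory.integral_mul_const]
        refine MeasureTheory.setIntegral_mono_set
          ((hφ_int.mono_set (fun z hz => ⟨le_trans hc0 (le_of_lt hz.1), le_trans hz.2 ht1T⟩)).mul_const K)
          ?_ ?_
        · have hnn : ∀ᵐ x ∂(volume.restrict (Set.Ioc cc t1)), 0 ≤ φ x * K := by
            rw [ae_restrict_iff' measurableSet_Ioc]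
            refine MeasureTheory.ae_of_all _ (fun x hx => ?_)
            have hxI : x ∈ Set.Icc (0:ℝ) T :=
              ⟨le_trans hc0 (le_of_lt hx.1), le_trans hx.2 ht1T⟩
            exact mul_nonneg (hφ_nonneg x hxI) hK0
          exact hnn
        · exact Filter.Eventually.of_forall (Set.Ioc_subset_Ioc le_rfl ht.2)
      have hfin : (∫ s in Set.Ioc cc t1, φ s) * K ≤ (1/2) * K := by
        apply mul_le_mul_of_nonneg_right (le_of_lt hsmall) hK0
      calc y t ≤ _ := h
        _ = (∫ s in Set.Ioc cc t, φ s * y s) := by rw [hsplit, hzero1, zero_add]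
        _ ≤ (1/2) * K := le_trans hmono (le_trans hmono2 hfin)
        _ = K * (1/2) := by ring
    -- so K ≤ K/2, K = 0
    have hKle : K ≤ K * (1/2) := hest xs hxs
    have hKzero : K = 0 := by linarith
    have hyzero : ∀ s ∈ Set.Icc cc t1, y s = 0 := by
      intro s hs
      exact le_antisymm (hKzero ▸ hmax hs) (hy_nonneg s (hsub hs))
    have ht1A : t1 ∈ A := by
      refine ⟨ht1Icc, fun s hs => ?_⟩
      rcases le_or_gt s cc with h | h
      · exact hyc s ⟨hs.1, h⟩
      · exact hyzero s ⟨le_of_lt h, hs.2⟩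
    have : t1 ≤ cc := le_csSup hAbdd ht1A
    linarith
  exact hyc t0 ⟨ht0.1, hccT ▸ ht0.2⟩

end Gronwall
section Bounds

lemma kk_cube {k0 lam : ℝ} (hk0 : 0 < k0) (hlam : 1 < lam) (m : ℤ) :
    (kk k0 lam m) ^ ((1:ℝ)/3) * (kk k0 lam (m+1)) ^ ((1:ℝ)/3) * (kk k0 lam (m+2)) ^ ((1:ℝ)/3)
      = kk k0 lam (m+1) := by
  have hl : (0:ℝ) < lam := lt_trans one_pos hlam
  have h1 : kk k0 lam (m+1) = lam * kk k0 lam m := kk_succ hlam m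
  have h2 : kk k0 lam (m+2) = lam * kk k0 lam (m+1) := by
    have := kk_succ (k0 := k0) hlam (m+1)
    rw [show m + 1 + 1 = m + 2 by ring] at this
    exact this
  have hprod : kk k0 lam m * kk k0 lam (m+1) * kk k0 lam (m+2)
      = (kk k0 lam (m+1)) ^ (3:ℕ) := by
    rw [h2, h1]
    ring
  rw [← Real.mul_rpow (le_of_lt (kk_pos hk0 hlam m)) (le_of_lt (kk_pos hk0 hlam (m+1))),
    ← Real.mul_rpow (mul_nonneg (le_of_lt (kk_pos hk0 hlam m)) (le_of_lt (kk_pos hk0 hlam (m+1))))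
      (le_of_lt (kk_pos hk0 hlam (m+2))), hprod]
  rw [← Real.rpow_natCast (kk k0 lam (m+1)) 3,
    ← Real.rpow_mul (le_of_lt (kk_pos hk0 hlam (m+1)))]
  norm_num

lemma rpow_third_sq {x : ℝ} (hx : 0 ≤ x) (r : ℝ) :
    (x ^ ((1:ℝ)/3) * r) ^ 2 = x ^ ((2:ℝ)/3) * r ^ 2 := by
  rw [mul_pow, ← Real.rpow_natCast (x ^ ((1:ℝ)/3)) 2, ← Real.rpow_mul hx]
  norm_num

lemma Fw_bound {k0 lam : ℝ} (hk0 : 0 < k0) (hlam : 1 < lam) (W : ℤ → ℂ) (A : ℝ)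
    (hA : ∀ j : ℤ, (kk k0 lam j) ^ ((1:ℝ)/3) * ‖W j‖ ≤ A) (m : ℤ) :
    |Fw k0 lam W m| ≤ A * (((kk k0 lam (m+1)) ^ ((2:ℝ)/3) * ‖W (m+1)‖^2
      + (kk k0 lam (m+2)) ^ ((2:ℝ)/3) * ‖W (m+2)‖^2) / 2) := by
  set b1 := (kk k0 lam m) ^ ((1:ℝ)/3) * ‖W m‖ with hb1
  set b2 := (kk k0 lam (m+1)) ^ ((1:ℝ)/3) * ‖W (m+1)‖ with hb2
  set b3 := (kk k0 lam (m+2)) ^ ((1:ℝ)/3) * ‖W (m+2)‖ with hb3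
  have hb1nn : 0 ≤ b1 := mul_nonneg (Real.rpow_nonneg (le_of_lt (kk_pos hk0 hlam m)) _) (norm_nonneg _)
  have hb2nn : 0 ≤ b2 := mul_nonneg (Real.rpow_nonneg (le_of_lt (kk_pos hk0 hlam _)) _) (norm_nonneg _)
  have hb3nn : 0 ≤ b3 := mul_nonneg (Real.rpow_nonneg (le_of_lt (kk_pos hk0 hlam _)) _) (norm_nonneg _)
  have hAnn : 0 ≤ A := le_trans hb1nn (hA m)
  have habs : |Fw k0 lam W m| ≤ b1 * b2 * b3 := by
    rw [Fw, abs_mul, abs_of_pos (kk_pos hk0 hlam (m+1))]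
    have him : |(W (m+2) * (starRingEnd ℂ) (W (m+1)) * (starRingEnd ℂ) (W m)).im|
        ≤ ‖W (m+2)‖ * ‖W (m+1)‖ * ‖W m‖ := by
      calc |(W (m+2) * (starRingEnd ℂ) (W (m+1)) * (starRingEnd ℂ) (W m)).im|
          ≤ ‖W (m+2) * (starRingEnd ℂ) (W (m+1)) * (starRingEnd ℂ) (W m)‖ :=
            Complex.abs_im_le_norm _
        _ = ‖W (m+2)‖ * ‖W (m+1)‖ * ‖W m‖ := by
            simp [norm_mul, RCLike.norm_conj]
    calc kk k0 lam (m+1) * |(W (m+2) * (starRingEnd ℂ) (W (m+1)) * (starRingEnd ℂ) (W m)).im|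
        ≤ kk k0 lam (m+1) * (‖W (m+2)‖ * ‖W (m+1)‖ * ‖W m‖) := by
          exact mul_le_mul_of_nonneg_left him (le_of_lt (kk_pos hk0 hlam (m+1)))
      _ = b1 * b2 * b3 := by
          rw [hb1, hb2, hb3]
          conv_lhs => rw [← kk_cube hk0 hlam m]
          ring
  have hb23 : b1 * b2 * b3 ≤ A * ((b2^2 + b3^2)/2) := by
    have h1 : b2 * b3 ≤ (b2^2 + b3^2)/2 := by nlinarith [sq_nonneg (b2 - b3)]
    have h2 : b1 * (b2 * b3) ≤ A * ((b2^2 + b3^2)/2) := by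
      apply mul_le_mul (hA m) h1 (mul_nonneg hb2nn hb3nn) hAnn
    calc b1 * b2 * b3 = b1 * (b2 * b3) := by ring
      _ ≤ A * ((b2^2 + b3^2)/2) := h2
  calc |Fw k0 lam W m| ≤ b1 * b2 * b3 := habs
    _ ≤ A * ((b2^2 + b3^2)/2) := hb23
    _ = A * (((kk k0 lam (m+1)) ^ ((2:ℝ)/3) * ‖W (m+1)‖^2
      + (kk k0 lam (m+2)) ^ ((2:ℝ)/3) * ‖W (m+2)‖^2) / 2) := by
        rw [hb2, hb3, rpow_third_sq (le_of_lt (kk_pos hk0 hlam _)),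
          rpow_third_sq (le_of_lt (kk_pos hk0 hlam _))]

lemma Rterm_bound {a b c k0 lam : ℝ} (hk0 : 0 < k0) (hlam : 1 < lam) (U W : ℤ → ℂ) (Wb : ℝ)
    (hWb : ∀ j : ℤ, kk k0 lam j * ‖U j‖ ≤ Wb) (m : ℤ) :
    ‖Rterm a b c k0 lam U W m‖ ≤ lam * Wb *
      (|a| * (‖W (m+2)‖ + ‖W (m+1)‖) + |b| * (‖W (m+1)‖ + ‖W (m-1)‖)
        + |c| * (‖W (m-1)‖ + ‖W (m-2)‖)) := by
  have hl1 : (1:ℝ) ≤ lam := le_of_lt hlam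
  have hWbnn : 0 ≤ Wb := le_trans (mul_nonneg (le_of_lt (kk_pos hk0 hlam 0)) (norm_nonneg _)) (hWb 0)
  have hkmono : ∀ j : ℤ, kk k0 lam j ≤ kk k0 lam (j+1) := by
    intro j
    rw [kk_succ hlam j]
    nlinarith [kk_pos hk0 hlam j]
  -- the six coefficient bounds
  have k1 : kk k0 lam (m+1) * ‖U (m+1)‖ ≤ lam * Wb := by
    calc kk k0 lam (m+1) * ‖U (m+1)‖ ≤ Wb := hWb _
      _ ≤ lam * Wb := by nlinarith
  have k2 : kk k0 lam (m+1) * ‖U (m+2)‖ ≤ lam * Wb := by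
    calc kk k0 lam (m+1) * ‖U (m+2)‖ ≤ kk k0 lam (m+2) * ‖U (m+2)‖ := by
          have := hkmono (m+1); rw [show m+1+1 = m+2 by ring] at this
          exact mul_le_mul_of_nonneg_right this (norm_nonneg _)
      _ ≤ Wb := hWb _
      _ ≤ lam * Wb := by nlinarith
  have k3 : kk k0 lam m * ‖U (m-1)‖ ≤ lam * Wb := by
    have h : kk k0 lam m = lam * kk k0 lam (m-1) := by
      have := kk_succ (k0 := k0) hlam (m-1)
      rw [show m-1+1 = m by ring] at this
      exact this
    rw [h, mul_assoc]
    exact mul_le_mul_of_nonneg_left (hWb _) (by linarith)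
  have k4 : kk k0 lam m * ‖U (m+1)‖ ≤ lam * Wb := by
    calc kk k0 lam m * ‖U (m+1)‖ ≤ kk k0 lam (m+1) * ‖U (m+1)‖ :=
          mul_le_mul_of_nonneg_right (hkmono m) (norm_nonneg _)
      _ ≤ lam * Wb := k1
  have k5 : kk k0 lam (m-1) * ‖U (m-2)‖ ≤ lam * Wb := by
    have h : kk k0 lam (m-1) = lam * kk k0 lam (m-2) := by
      have := kk_succ (k0 := k0) hlam (m-2)
      rw [show m-2+1 = m-1 by ring] at this
      exact this
    rw [h, mul_assoc]
    exact mul_le_mul_of_nonneg_left (hWb _) (by linarith)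
  have k6 : kk k0 lam (m-1) * ‖U (m-1)‖ ≤ lam * Wb := by
    calc kk k0 lam (m-1) * ‖U (m-1)‖ ≤ Wb := hWb _
      _ ≤ lam * Wb := by nlinarith
  -- norm computation
  have hnorm : ‖Rterm a b c k0 lam U W m‖ ≤
      |a| * (kk k0 lam (m+1) * (‖W (m+2)‖ * ‖U (m+1)‖ + ‖U (m+2)‖ * ‖W (m+1)‖))
      + |b| * (kk k0 lam m * (‖W (m+1)‖ * ‖U (m-1)‖ + ‖U (m+1)‖ * ‖W (m-1)‖))
      + |c| * (kk k0 lam (m-1) * (‖W (m-1)‖ * ‖U (m-2)‖ + ‖U (m-1)‖ * ‖W (m-2)‖)) := by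
    rw [Rterm]
    rw [norm_mul]
    simp only [norm_neg, Complex.norm_I, one_mul]
    refine le_trans (norm_sub_le _ _) ?_
    refine le_trans (add_le_add_left (norm_add_le _ _) _) ?_
    have e1 : ‖(a:ℂ) * ((kk k0 lam (m+1) : ℝ) : ℂ) *
        (W (m+2) * (starRingEnd ℂ) (U (m+1)) + U (m+2) * (starRingEnd ℂ) (W (m+1)))‖
        ≤ |a| * (kk k0 lam (m+1) * (‖W (m+2)‖ * ‖U (m+1)‖ + ‖U (m+2)‖ * ‖W (m+1)‖)) := by
      rw [norm_mul, norm_mul]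
      simp only [Complex.norm_real, Real.norm_eq_abs, Complex.norm_ofNat]
      rw [abs_of_pos (kk_pos hk0 hlam (m+1))]
      have : ‖W (m+2) * (starRingEnd ℂ) (U (m+1)) + U (m+2) * (starRingEnd ℂ) (W (m+1))‖
          ≤ ‖W (m+2)‖ * ‖U (m+1)‖ + ‖U (m+2)‖ * ‖W (m+1)‖ := by
        refine le_trans (norm_add_le _ _) ?_
        simp [norm_mul, RCLike.norm_conj]
      calc |a| * kk k0 lam (m+1) * ‖_‖ ≤ |a| * kk k0 lam (m+1)
            * (‖W (m+2)‖ * ‖U (m+1)‖ + ‖U (m+2)‖ * ‖W (m+1)‖) := by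
            exact mul_le_mul_of_nonneg_left this
              (mul_nonneg (abs_nonneg _) (le_of_lt (kk_pos hk0 hlam _)))
        _ = |a| * (kk k0 lam (m+1) * (‖W (m+2)‖ * ‖U (m+1)‖ + ‖U (m+2)‖ * ‖W (m+1)‖)) := by ring
    have e2 : ‖(b:ℂ) * ((kk k0 lam m : ℝ) : ℂ) *
        (W (m+1) * (starRingEnd ℂ) (U (m-1)) + U (m+1) * (starRingEnd ℂ) (W (m-1)))‖
        ≤ |b| * (kk k0 lam m * (‖W (m+1)‖ * ‖U (m-1)‖ + ‖U (m+1)‖ * ‖W (m-1)‖)) := by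
      rw [norm_mul, norm_mul]
      simp only [Complex.norm_real, Real.norm_eq_abs]
      rw [abs_of_pos (kk_pos hk0 hlam m)]
      have : ‖W (m+1) * (starRingEnd ℂ) (U (m-1)) + U (m+1) * (starRingEnd ℂ) (W (m-1))‖
          ≤ ‖W (m+1)‖ * ‖U (m-1)‖ + ‖U (m+1)‖ * ‖W (m-1)‖ := by
        refine le_trans (norm_add_le _ _) ?_
        simp [norm_mul, RCLike.norm_conj]
      calc |b| * kk k0 lam m * ‖_‖ ≤ |b| * kk k0 lam m
            * (‖W (m+1)‖ * ‖U (m-1)‖ + ‖U (m+1)‖ * ‖W (m-1)‖) := by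
            exact mul_le_mul_of_nonneg_left this
              (mul_nonneg (abs_nonneg _) (le_of_lt (kk_pos hk0 hlam _)))
        _ = |b| * (kk k0 lam m * (‖W (m+1)‖ * ‖U (m-1)‖ + ‖U (m+1)‖ * ‖W (m-1)‖)) := by ring
    have e3 : ‖(c:ℂ) * ((kk k0 lam (m-1) : ℝ) : ℂ) *
        (W (m-1) * U (m-2) + U (m-1) * W (m-2))‖
        ≤ |c| * (kk k0 lam (m-1) * (‖W (m-1)‖ * ‖U (m-2)‖ + ‖U (m-1)‖ * ‖W (m-2)‖)) := by
      rw [norm_mul, norm_mul]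
      simp only [Complex.norm_real, Real.norm_eq_abs]
      rw [abs_of_pos (kk_pos hk0 hlam (m-1))]
      have : ‖W (m-1) * U (m-2) + U (m-1) * W (m-2)‖
          ≤ ‖W (m-1)‖ * ‖U (m-2)‖ + ‖U (m-1)‖ * ‖W (m-2)‖ := by
        refine le_trans (norm_add_le _ _) ?_
        simp [norm_mul]
      calc |c| * kk k0 lam (m-1) * ‖_‖ ≤ |c| * kk k0 lam (m-1)
            * (‖W (m-1)‖ * ‖U (m-2)‖ + ‖U (m-1)‖ * ‖W (m-2)‖) := by
            exact mul_le_mul_of_nonneg_left this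
              (mul_nonneg (abs_nonneg _) (le_of_lt (kk_pos hk0 hlam _)))
        _ = |c| * (kk k0 lam (m-1) * (‖W (m-1)‖ * ‖U (m-2)‖ + ‖U (m-1)‖ * ‖W (m-2)‖)) := by ring
    exact add_le_add (add_le_add e1 e2) e3
  -- combine
  refine le_trans hnorm ?_
  have w2 := norm_nonneg (W (m+2)); have w1 := norm_nonneg (W (m+1))
  have wm1 := norm_nonneg (W (m-1)); have wm2 := norm_nonneg (W (m-2))
  have u2 := norm_nonneg (U (m+2)); have u1 := norm_nonneg (U (m+1))
  have um1 := norm_nonneg (U (m-1)); have um2 := norm_nonneg (U (m-2))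
  have ha := abs_nonneg a; have hb := abs_nonneg b; have hc := abs_nonneg c
  nlinarith [mul_le_mul_of_nonneg_left (mul_le_mul_of_nonneg_left k1 w2) ha,
    mul_le_mul_of_nonneg_left (mul_le_mul_of_nonneg_left k2 w1) ha,
    mul_le_mul_of_nonneg_left (mul_le_mul_of_nonneg_left k3 w1) hb,
    mul_le_mul_of_nonneg_left (mul_le_mul_of_nonneg_left k4 wm1) hb,
    mul_le_mul_of_nonneg_left (mul_le_mul_of_nonneg_left k5 wm1) hc,
    mul_le_mul_of_nonneg_left (mul_le_mul_of_nonneg_left k6 wm2) hc]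

end Bounds
section Core

set_option maxHeartbeats 2000000 in
lemma core_estimate (a b c k0 lam MH MV Wb : ℝ) (hk0 : 0 < k0) (hlam : 1 < lam)
    (habc : a + b + c = 0) (U V : ℤ → ℂ)
    (hU0 : ∀ j : ℤ, j ≤ 0 → U j = 0) (hV0 : ∀ j : ℤ, j ≤ 0 → V j = 0)
    (hWb0 : 0 ≤ Wb)
    (hsq : Summable fun n : ℕ => ‖U ((n:ℤ)+1) - V ((n:ℤ)+1)‖^2)
    (hy : (∑' n : ℕ, ‖U ((n:ℤ)+1) - V ((n:ℤ)+1)‖^2) ≤ MH)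
    (hq : Summable fun n : ℕ => (kk k0 lam ((n:ℤ)+1)) ^ ((2:ℝ)/3) * ‖U ((n:ℤ)+1) - V ((n:ℤ)+1)‖^2)
    (hqb : (∑' n : ℕ, (kk k0 lam ((n:ℤ)+1)) ^ ((2:ℝ)/3) * ‖U ((n:ℤ)+1) - V ((n:ℤ)+1)‖^2) ≤ MV)
    (hWb : ∀ j : ℤ, kk k0 lam j * ‖U j‖ ≤ Wb) :
    Summable (fun n : ℕ => -2 * ((sB a b c k0 lam U ((n:ℤ)+1) - sB a b c k0 lam V ((n:ℤ)+1))
        * (starRingEnd ℂ) (U ((n:ℤ)+1) - V ((n:ℤ)+1))).re)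
    ∧ (∑' n : ℕ, |(-2 * ((sB a b c k0 lam U ((n:ℤ)+1) - sB a b c k0 lam V ((n:ℤ)+1))
        * (starRingEnd ℂ) (U ((n:ℤ)+1) - V ((n:ℤ)+1))).re)|)
        ≤ 2*((|a|+|b|+|c|) * Real.sqrt MV * MV) + 8*lam*(|a|+|b|+|c|)*Wb*MH
    ∧ (∑' n : ℕ, -2 * ((sB a b c k0 lam U ((n:ℤ)+1) - sB a b c k0 lam V ((n:ℤ)+1))
        * (starRingEnd ℂ) (U ((n:ℤ)+1) - V ((n:ℤ)+1))).re)
        ≤ 8*lam*(|a|+|b|+|c|)*Wb*(∑' n : ℕ, ‖U ((n:ℤ)+1) - V ((n:ℤ)+1)‖^2) := by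
  set W : ℤ → ℂ := fun j => U j - V j with hW
  have hW0 : ∀ j : ℤ, j ≤ 0 → W j = 0 := by
    intro j hj; simp [hW, hU0 j hj, hV0 j hj]
  set κ : ℝ := |a| + |b| + |c| with hκ
  have hκ0 : 0 ≤ κ := by positivity
  have hlam0 : (0:ℝ) < lam := lt_trans one_pos hlam
  set sZ : ℤ → ℝ := fun j => ‖W j‖^2 with hsZ
  set qZ : ℤ → ℝ := fun j => (kk k0 lam j) ^ ((2:ℝ)/3) * ‖W j‖^2 with hqZ
  have hsZnn : ∀ j, 0 ≤ sZ j := fun j => sq_nonneg _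
  have hqZnn : ∀ j, 0 ≤ qZ j :=
    fun j => mul_nonneg (Real.rpow_nonneg (le_of_lt (kk_pos hk0 hlam j)) _) (sq_nonneg _)
  have hsZ0 : ∀ j ≤ 0, sZ j = 0 := fun j hj => by simp [hsZ, hW0 j hj]
  have hqZ0 : ∀ j ≤ 0, qZ j = 0 := fun j hj => by simp [hqZ, hW0 j hj]
  have hsq' : Summable fun n : ℕ => sZ ((n:ℤ)+1) := hsq
  have hq' : Summable fun n : ℕ => qZ ((n:ℤ)+1) := hq
  have hytsum : (∑' n : ℕ, ‖U ((n:ℤ)+1) - V ((n:ℤ)+1)‖^2) = ∑' n : ℕ, sZ ((n:ℤ)+1) := rfl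
  set y : ℝ := ∑' n : ℕ, sZ ((n:ℤ)+1) with hydef
  have hynn : 0 ≤ y := tsum_nonneg (fun n => hsZnn _)
  have hyMH : y ≤ MH := by rw [← hytsum]; exact hy
  set Abd : ℝ := Real.sqrt MV with hAbd
  have hAbd0 : 0 ≤ Abd := Real.sqrt_nonneg _
  have hMV0 : 0 ≤ MV := le_trans (le_trans (tsum_nonneg (fun n => hqZnn _)) (le_of_eq rfl)) hqb
  -- pointwise 1/3-power bound
  have hA : ∀ j : ℤ, (kk k0 lam j) ^ ((1:ℝ)/3) * ‖W j‖ ≤ Abd := by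
    intro j
    rcases le_or_gt j 0 with hj | hj
    · rw [hW0 j hj]; simp [hAbd0]
    · have hqj : qZ j ≤ MV := by
        have hn : ((j-1).toNat : ℤ) + 1 = j := by
          have := Int.toNat_of_nonneg (by omega : (0:ℤ) ≤ j - 1); omega
        have hle : qZ (((j-1).toNat : ℤ) + 1) ≤ ∑' n : ℕ, qZ ((n:ℤ)+1) :=
          Summable.le_tsum hq' _ (fun _ _ => hqZnn _)
        rw [hn] at hle
        exact le_trans hle hqb
      have hx0 : 0 ≤ (kk k0 lam j) ^ ((1:ℝ)/3) * ‖W j‖ :=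
        mul_nonneg (Real.rpow_nonneg (le_of_lt (kk_pos hk0 hlam j)) _) (norm_nonneg _)
      have hx2 : ((kk k0 lam j) ^ ((1:ℝ)/3) * ‖W j‖)^2 ≤ MV := by
        rw [rpow_third_sq (le_of_lt (kk_pos hk0 hlam j))]
        exact hqj
      calc (kk k0 lam j) ^ ((1:ℝ)/3) * ‖W j‖
          = Real.sqrt (((kk k0 lam j) ^ ((1:ℝ)/3) * ‖W j‖)^2) := (Real.sqrt_sq hx0).symm
        _ ≤ Real.sqrt MV := Real.sqrt_le_sqrt hx2
  -- shifted q sums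
  have hq1 : Summable (fun n : ℕ => qZ ((n:ℤ)+1+1)) := by
    simpa using summable_shift_up qZ 1 hq'
  have hq2 : Summable (fun n : ℕ => qZ ((n:ℤ)+1+2)) := by
    simpa using summable_shift_up qZ 2 hq'
  have hq1t : (∑' n : ℕ, qZ ((n:ℤ)+1+1)) ≤ MV := by
    have := tsum_shift_up_le qZ hqZnn 1 hq'
    simp only [Nat.cast_one] at this
    exact le_trans this hqb
  have hq2t : (∑' n : ℕ, qZ ((n:ℤ)+1+2)) ≤ MV := by
    have := tsum_shift_up_le qZ hqZnn 2 hq'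
    simp only [Nat.cast_ofNat] at this
    exact le_trans this hqb
  -- Fw bounds
  set F : ℤ → ℝ := Fw k0 lam W with hF
  have hF0 : ∀ j ≤ 0, F j = 0 := by
    intro j hj
    simp [hF, Fw, hW0 j hj]
  have hFb : ∀ n : ℕ, |F ((n:ℤ)+1)| ≤ Abd * ((qZ ((n:ℤ)+1+1) + qZ ((n:ℤ)+1+2))/2) :=
    fun n => Fw_bound hk0 hlam W Abd hA ((n:ℤ)+1)
  have hFmaj : Summable (fun n : ℕ => Abd * ((qZ ((n:ℤ)+1+1) + qZ ((n:ℤ)+1+2))/2)) :=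
    ((hq1.add hq2).div_const 2).mul_left Abd
  have habsF : Summable (fun n : ℕ => |F ((n:ℤ)+1)|) :=
    Summable.of_nonneg_of_le (fun n => abs_nonneg _) hFb hFmaj
  have habsFt : (∑' n : ℕ, |F ((n:ℤ)+1)|) ≤ Abd * MV := by
    calc (∑' n : ℕ, |F ((n:ℤ)+1)|)
        ≤ ∑' n : ℕ, Abd * ((qZ ((n:ℤ)+1+1) + qZ ((n:ℤ)+1+2))/2) :=
          Summable.tsum_le_tsum hFb habsF hFmaj
      _ = Abd * (((∑' n : ℕ, qZ ((n:ℤ)+1+1)) + ∑' n : ℕ, qZ ((n:ℤ)+1+2))/2) := by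
          rw [tsum_mul_left, tsum_div_const, Summable.tsum_add hq1 hq2]
      _ ≤ Abd * ((MV + MV)/2) := by
          apply mul_le_mul_of_nonneg_left _ hAbd0
          linarith
      _ = Abd * MV := by ring
  -- shifted |F| sums
  have habsF1 : Summable (fun n : ℕ => |F ((n:ℤ)+1-1)|) := by
    simpa using summable_shift_dn (fun j => |F j|) 1 habsF
  have habsF2 : Summable (fun n : ℕ => |F ((n:ℤ)+1-2)|) := by
    simpa using summable_shift_dn (fun j => |F j|) 2 habsF
  have hFabs0 : ∀ j ≤ 0, |F j| = 0 := fun j hj => by rw [hF0 j hj]; simp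
  have habsF1t : (∑' n : ℕ, |F ((n:ℤ)+1-1)|) ≤ Abd * MV := by
    have := tsum_shift_dn (fun j => |F j|) hFabs0 1 habsF
    simp only [Nat.cast_one] at this
    rw [this]; exact habsFt
  have habsF2t : (∑' n : ℕ, |F ((n:ℤ)+1-2)|) ≤ Abd * MV := by
    have := tsum_shift_dn (fun j => |F j|) hFabs0 2 habsF
    simp only [Nat.cast_ofNat] at this
    rw [this]; exact habsFt
  have hFs : Summable (fun n : ℕ => F ((n:ℤ)+1)) := habsF.of_abs
  have hFs1 : Summable (fun n : ℕ => F ((n:ℤ)+1-1)) := habsF1.of_abs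
  have hFs2 : Summable (fun n : ℕ => F ((n:ℤ)+1-2)) := habsF2.of_abs
  -- pP
  set pP : ℕ → ℝ := fun n => (sB a b c k0 lam W ((n:ℤ)+1)
    * (starRingEnd ℂ) (W ((n:ℤ)+1))).re with hpP
  have hpPeq : ∀ n : ℕ, pP n = a * F ((n:ℤ)+1) + b * F ((n:ℤ)+1-1) + c * F ((n:ℤ)+1-2) :=
    fun n => sB_flux a b c k0 lam W ((n:ℤ)+1)
  have hpPsum : Summable pP := by
    have : pP = fun n : ℕ => a * F ((n:ℤ)+1) + b * F ((n:ℤ)+1-1) + c * F ((n:ℤ)+1-2) :=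
      funext hpPeq
    rw [this]
    exact ((hFs.mul_left a).add (hFs1.mul_left b)).add (hFs2.mul_left c)
  have hpPabs : ∀ n : ℕ, |pP n| ≤ |a| * |F ((n:ℤ)+1)| + |b| * |F ((n:ℤ)+1-1)|
      + |c| * |F ((n:ℤ)+1-2)| := by
    intro n
    rw [hpPeq n]
    calc |a * F ((n:ℤ)+1) + b * F ((n:ℤ)+1-1) + c * F ((n:ℤ)+1-2)|
        ≤ |a * F ((n:ℤ)+1) + b * F ((n:ℤ)+1-1)| + |c * F ((n:ℤ)+1-2)| := abs_add_le _ _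
      _ ≤ |a * F ((n:ℤ)+1)| + |b * F ((n:ℤ)+1-1)| + |c * F ((n:ℤ)+1-2)| := by
          have := abs_add_le (a * F ((n:ℤ)+1)) (b * F ((n:ℤ)+1-1))
          linarith
      _ = |a| * |F ((n:ℤ)+1)| + |b| * |F ((n:ℤ)+1-1)| + |c| * |F ((n:ℤ)+1-2)| := by
          rw [abs_mul, abs_mul, abs_mul]
  have hpPmaj : Summable (fun n : ℕ => |a| * |F ((n:ℤ)+1)| + |b| * |F ((n:ℤ)+1-1)|
      + |c| * |F ((n:ℤ)+1-2)|) :=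
    ((habsF.mul_left _).add (habsF1.mul_left _)).add (habsF2.mul_left _)
  have habspP : Summable (fun n => |pP n|) :=
    Summable.of_nonneg_of_le (fun n => abs_nonneg _) hpPabs hpPmaj
  have htabspP : (∑' n : ℕ, |pP n|) ≤ κ * (Abd * MV) := by
    calc (∑' n : ℕ, |pP n|) ≤ ∑' n : ℕ, (|a| * |F ((n:ℤ)+1)| + |b| * |F ((n:ℤ)+1-1)|
          + |c| * |F ((n:ℤ)+1-2)|) := Summable.tsum_le_tsum hpPabs habspP hpPmaj
      _ = |a| * (∑' n : ℕ, |F ((n:ℤ)+1)|) + |b| * (∑' n : ℕ, |F ((n:ℤ)+1-1)|)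
          + |c| * (∑' n : ℕ, |F ((n:ℤ)+1-2)|) := by
          rw [Summable.tsum_add ((habsF.mul_left _).add (habsF1.mul_left _)) (habsF2.mul_left _),
            Summable.tsum_add (habsF.mul_left _) (habsF1.mul_left _),
            tsum_mul_left, tsum_mul_left, tsum_mul_left]
      _ ≤ |a| * (Abd * MV) + |b| * (Abd * MV) + |c| * (Abd * MV) := by
          gcongr
      _ = κ * (Abd * MV) := by rw [hκ]; ring
  have htpP0 : (∑' n : ℕ, pP n) = 0 := flux_tsum_zero habc W hW0 habsF
  -- pR
  set pR : ℕ → ℝ := fun n => (Rterm a b c k0 lam U W ((n:ℤ)+1)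
    * (starRingEnd ℂ) (W ((n:ℤ)+1))).re with hpR
  set ν : ℕ → ℝ := fun n => lam * Wb * (κ * ((sZ ((n:ℤ)+1+2) + sZ ((n:ℤ)+1+1)
    + sZ ((n:ℤ)+1-1) + sZ ((n:ℤ)+1-2))/2 + 2 * sZ ((n:ℤ)+1))) with hν
  have hpRb : ∀ n : ℕ, |pR n| ≤ ν n := by
    intro n
    have h1 : |pR n| ≤ ‖Rterm a b c k0 lam U W ((n:ℤ)+1)‖ * ‖W ((n:ℤ)+1)‖ := by
      calc |pR n| ≤ ‖Rterm a b c k0 lam U W ((n:ℤ)+1) * (starRingEnd ℂ) (W ((n:ℤ)+1))‖ :=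
            Complex.abs_re_le_norm _
        _ = ‖Rterm a b c k0 lam U W ((n:ℤ)+1)‖ * ‖W ((n:ℤ)+1)‖ := by
            rw [norm_mul, RCLike.norm_conj]
    have h2 := Rterm_bound (a := a) (b := b) (c := c) hk0 hlam U W Wb hWb ((n:ℤ)+1)
    set t2 := ‖W ((n:ℤ)+1+2)‖; set t1 := ‖W ((n:ℤ)+1+1)‖
    set tm1 := ‖W ((n:ℤ)+1-1)‖; set tm2 := ‖W ((n:ℤ)+1-2)‖
    set s0 := ‖W ((n:ℤ)+1)‖
    have hs0 : 0 ≤ s0 := norm_nonneg _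
    have h3 : ‖Rterm a b c k0 lam U W ((n:ℤ)+1)‖ * s0
        ≤ (lam * Wb * (|a| * (t2 + t1) + |b| * (t1 + tm1) + |c| * (tm1 + tm2))) * s0 :=
      mul_le_mul_of_nonneg_right h2 hs0
    have ht2 : 0 ≤ t2 := norm_nonneg _
    have ht1 : 0 ≤ t1 := norm_nonneg _
    have htm1 : 0 ≤ tm1 := norm_nonneg _
    have htm2 : 0 ≤ tm2 := norm_nonneg _
    have big : (0:ℝ) ≤ (t2^2 + t1^2 + tm1^2 + tm2^2)/2 + 2 * s0^2 := by positivity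
    have e1 : (t2 + t1) * s0 ≤ (t2^2 + t1^2 + tm1^2 + tm2^2)/2 + 2 * s0^2 := by
      nlinarith [sq_nonneg (t2 - s0), sq_nonneg (t1 - s0), sq_nonneg tm1, sq_nonneg tm2]
    have e2 : (t1 + tm1) * s0 ≤ (t2^2 + t1^2 + tm1^2 + tm2^2)/2 + 2 * s0^2 := by
      nlinarith [sq_nonneg (t1 - s0), sq_nonneg (tm1 - s0), sq_nonneg t2, sq_nonneg tm2]
    have e3 : (tm1 + tm2) * s0 ≤ (t2^2 + t1^2 + tm1^2 + tm2^2)/2 + 2 * s0^2 := by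
      nlinarith [sq_nonneg (tm1 - s0), sq_nonneg (tm2 - s0), sq_nonneg t2, sq_nonneg t1]
    have hsum : (|a| * (t2 + t1) + |b| * (t1 + tm1) + |c| * (tm1 + tm2)) * s0
        ≤ κ * ((t2^2 + t1^2 + tm1^2 + tm2^2)/2 + 2 * s0^2) := by
      have f1 := mul_le_mul_of_nonneg_left e1 (abs_nonneg a)
      have f2 := mul_le_mul_of_nonneg_left e2 (abs_nonneg b)
      have f3 := mul_le_mul_of_nonneg_left e3 (abs_nonneg c)
      rw [hκ]
      nlinarith [f1, f2, f3]
    have hlw : (0:ℝ) ≤ lam * Wb := mul_nonneg (le_of_lt hlam0) hWb0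
    calc |pR n| ≤ ‖Rterm a b c k0 lam U W ((n:ℤ)+1)‖ * s0 := h1
      _ ≤ (lam * Wb * (|a| * (t2 + t1) + |b| * (t1 + tm1) + |c| * (tm1 + tm2))) * s0 := h3
      _ = lam * Wb * ((|a| * (t2 + t1) + |b| * (t1 + tm1) + |c| * (tm1 + tm2)) * s0) := by ring
      _ ≤ lam * Wb * (κ * ((t2^2 + t1^2 + tm1^2 + tm2^2)/2 + 2 * s0^2)) :=
          mul_le_mul_of_nonneg_left hsum hlw
      _ = ν n := by rw [hν]
  -- summability of the majorant
  have hs1u : Summable (fun n : ℕ => sZ ((n:ℤ)+1+1)) := by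
    simpa using summable_shift_up sZ 1 hsq'
  have hs2u : Summable (fun n : ℕ => sZ ((n:ℤ)+1+2)) := by
    simpa using summable_shift_up sZ 2 hsq'
  have hs1d : Summable (fun n : ℕ => sZ ((n:ℤ)+1-1)) := by
    simpa using summable_shift_dn sZ 1 hsq'
  have hs2d : Summable (fun n : ℕ => sZ ((n:ℤ)+1-2)) := by
    simpa using summable_shift_dn sZ 2 hsq'
  have hs1ut : (∑' n : ℕ, sZ ((n:ℤ)+1+1)) ≤ y := by
    have := tsum_shift_up_le sZ hsZnn 1 hsq'
    simp only [Nat.cast_one] at this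
    exact this
  have hs2ut : (∑' n : ℕ, sZ ((n:ℤ)+1+2)) ≤ y := by
    have := tsum_shift_up_le sZ hsZnn 2 hsq'
    simp only [Nat.cast_ofNat] at this
    exact this
  have hs1dt : (∑' n : ℕ, sZ ((n:ℤ)+1-1)) ≤ y := by
    have := tsum_shift_dn sZ hsZ0 1 hsq'
    simp only [Nat.cast_one] at this
    exact le_of_eq this
  have hs2dt : (∑' n : ℕ, sZ ((n:ℤ)+1-2)) ≤ y := by
    have := tsum_shift_dn sZ hsZ0 2 hsq'
    simp only [Nat.cast_ofNat] at this
    exact le_of_eq this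
  have hXsum : Summable (fun n : ℕ => (sZ ((n:ℤ)+1+2) + sZ ((n:ℤ)+1+1)
      + sZ ((n:ℤ)+1-1) + sZ ((n:ℤ)+1-2))/2 + 2 * sZ ((n:ℤ)+1)) :=
    ((((hs2u.add hs1u).add hs1d).add hs2d).div_const 2).add (hsq'.mul_left 2)
  have hνsum : Summable ν := (hXsum.mul_left κ).mul_left (lam * Wb)
  have habspR : Summable (fun n => |pR n|) :=
    Summable.of_nonneg_of_le (fun n => abs_nonneg _) hpRb hνsum
  have hpRsum : Summable pR := habspR.of_abs
  have hνt : (∑' n : ℕ, ν n) ≤ lam * Wb * (κ * (4 * y)) := by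
    have hXt : (∑' n : ℕ, ((sZ ((n:ℤ)+1+2) + sZ ((n:ℤ)+1+1)
        + sZ ((n:ℤ)+1-1) + sZ ((n:ℤ)+1-2))/2 + 2 * sZ ((n:ℤ)+1))) ≤ 4 * y := by
      rw [Summable.tsum_add ((((hs2u.add hs1u).add hs1d).add hs2d).div_const 2) (hsq'.mul_left 2),
        tsum_div_const, Summable.tsum_add ((hs2u.add hs1u).add hs1d) hs2d,
        Summable.tsum_add (hs2u.add hs1u) hs1d, Summable.tsum_add hs2u hs1u, tsum_mul_left]
      have : (∑' n : ℕ, sZ ((n:ℤ)+1)) = y := rfl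
      rw [this]
      linarith
    calc (∑' n : ℕ, ν n) = lam * Wb * (κ * (∑' n : ℕ, ((sZ ((n:ℤ)+1+2) + sZ ((n:ℤ)+1+1)
          + sZ ((n:ℤ)+1-1) + sZ ((n:ℤ)+1-2))/2 + 2 * sZ ((n:ℤ)+1)))) := by
          rw [hν, tsum_mul_left, tsum_mul_left]
      _ ≤ lam * Wb * (κ * (4 * y)) := by
          apply mul_le_mul_of_nonneg_left _ (mul_nonneg (le_of_lt hlam0) hWb0)
          exact mul_le_mul_of_nonneg_left hXt hκ0
  have htabspR : (∑' n : ℕ, |pR n|) ≤ lam * Wb * (κ * (4 * y)) :=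
    le_trans (Summable.tsum_le_tsum hpRb habspR hνsum) hνt
  -- decomposition of the goal summand
  have hdecompn : ∀ n : ℕ,
      -2 * ((sB a b c k0 lam U ((n:ℤ)+1) - sB a b c k0 lam V ((n:ℤ)+1))
        * (starRingEnd ℂ) (U ((n:ℤ)+1) - V ((n:ℤ)+1))).re
      = -2 * pR n + 2 * pP n := by
    intro n
    show -2 * ((sB a b c k0 lam U ((n:ℤ)+1) - sB a b c k0 lam V ((n:ℤ)+1))
        * (starRingEnd ℂ) (W ((n:ℤ)+1))).re = -2 * pR n + 2 * pP n
    rw [sB_decomp a b c k0 lam U V ((n:ℤ)+1), ← hW]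
    rw [hpR, hpP]
    simp only [sub_mul, Complex.sub_re]
    ring
  have hgoalfun : (fun n : ℕ =>
      -2 * ((sB a b c k0 lam U ((n:ℤ)+1) - sB a b c k0 lam V ((n:ℤ)+1))
        * (starRingEnd ℂ) (U ((n:ℤ)+1) - V ((n:ℤ)+1))).re)
      = fun n => -2 * pR n + 2 * pP n := funext hdecompn
  have hgsum : Summable (fun n : ℕ => -2 * pR n + 2 * pP n) :=
    (hpRsum.mul_left (-2)).add (hpPsum.mul_left 2)
  have habs_tsum_pR : |∑' n : ℕ, pR n| ≤ ∑' n : ℕ, |pR n| := by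
    have h := norm_tsum_le_tsum_norm (f := pR) (by simpa [Real.norm_eq_abs] using habspR)
    simpa [Real.norm_eq_abs] using h
  refine ⟨?_, ?_, ?_⟩
  · rw [hgoalfun]; exact hgsum
  · have hptw : ∀ n : ℕ, |(-2 * ((sB a b c k0 lam U ((n:ℤ)+1) - sB a b c k0 lam V ((n:ℤ)+1))
        * (starRingEnd ℂ) (U ((n:ℤ)+1) - V ((n:ℤ)+1))).re)| ≤ 2 * |pR n| + 2 * |pP n| := by
      intro n
      rw [hdecompn n]
      calc |(-2) * pR n + 2 * pP n| ≤ |(-2) * pR n| + |2 * pP n| := abs_add_le _ _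
        _ = 2 * |pR n| + 2 * |pP n| := by
            rw [abs_mul, abs_mul]; norm_num
    have hmaj : Summable (fun n : ℕ => 2 * |pR n| + 2 * |pP n|) :=
      (habspR.mul_left 2).add (habspP.mul_left 2)
    have habsg : Summable (fun n : ℕ =>
        |(-2 * ((sB a b c k0 lam U ((n:ℤ)+1) - sB a b c k0 lam V ((n:ℤ)+1))
        * (starRingEnd ℂ) (U ((n:ℤ)+1) - V ((n:ℤ)+1))).re)|) := by
      rw [show (fun n : ℕ =>
        |(-2 * ((sB a b c k0 lam U ((n:ℤ)+1) - sB a b c k0 lam V ((n:ℤ)+1))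
        * (starRingEnd ℂ) (U ((n:ℤ)+1) - V ((n:ℤ)+1))).re)|)
        = fun n => |(-2 * pR n + 2 * pP n)| from funext (fun n => by rw [hdecompn n])]
      exact hgsum.abs
    calc (∑' n : ℕ, |(-2 * ((sB a b c k0 lam U ((n:ℤ)+1) - sB a b c k0 lam V ((n:ℤ)+1))
        * (starRingEnd ℂ) (U ((n:ℤ)+1) - V ((n:ℤ)+1))).re)|)
        ≤ ∑' n : ℕ, (2 * |pR n| + 2 * |pP n|) := Summable.tsum_le_tsum hptw habsg hmaj
      _ = 2 * (∑' n : ℕ, |pR n|) + 2 * (∑' n : ℕ, |pP n|) := by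
          rw [Summable.tsum_add (habspR.mul_left 2) (habspP.mul_left 2), tsum_mul_left, tsum_mul_left]
      _ ≤ 2 * (lam * Wb * (κ * (4 * y))) + 2 * (κ * (Abd * MV)) := by
          have := htabspR; have := htabspP
          gcongr
      _ ≤ 2*(κ * Abd * MV) + 8*lam*κ*Wb*MH := by
          have h1 : lam * Wb * (κ * (4 * y)) ≤ lam * Wb * (κ * (4 * MH)) := by
            apply mul_le_mul_of_nonneg_left _ (mul_nonneg (le_of_lt hlam0) hWb0)
            apply mul_le_mul_of_nonneg_left _ hκ0
            linarith
          nlinarith [h1]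
  · rw [hgoalfun, Summable.tsum_add (hpRsum.mul_left (-2)) (hpPsum.mul_left 2),
      tsum_mul_left, tsum_mul_left, htpP0, hytsum]
    have h1 : -(∑' n : ℕ, pR n) ≤ ∑' n : ℕ, |pR n| := by
      have := neg_abs_le (∑' n : ℕ, pR n)
      linarith [habs_tsum_pR]
    have h2 : -2 * (∑' n : ℕ, pR n) ≤ 2 * (lam * Wb * (κ * (4 * y))) := by
      nlinarith [le_trans h1 htabspR]
    calc -2 * (∑' n : ℕ, pR n) + 2 * 0 ≤ 2 * (lam * Wb * (κ * (4 * y))) := by linarith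
      _ = 8*lam*κ*Wb*y := by ring
end Core
section FTC

open MeasureTheory intervalIntegral

lemma normsq_primitive (G : ℝ → ℂ) (hG : Continuous G) (t : ℝ) :
    ‖-(∫ s in (0:ℝ)..t, G s)‖^2
      = ∫ s in (0:ℝ)..t, (-2) * (G s * (starRingEnd ℂ) (-(∫ r in (0:ℝ)..s, G r))).re := by
  set Wf : ℝ → ℂ := fun τ => -(∫ s in (0:ℝ)..τ, G s) with hWf
  have hW' : ∀ τ : ℝ, HasDerivAt Wf (-(G τ)) τ := by
    intro τ
    exact (intervalIntegral.integral_hasDerivAt_right (hG.intervalIntegrable _ _)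
      (hG.stronglyMeasurableAtFilter _ _) hG.continuousAt).neg
  have hWcont : Continuous Wf := by
    refine continuous_iff_continuousAt.mpr (fun τ => (hW' τ).continuousAt)
  have hconj : ∀ τ : ℝ, HasDerivAt (fun τ => (starRingEnd ℂ) (Wf τ))
      ((starRingEnd ℂ) (-(G τ))) τ := by
    intro τ
    have := (Complex.conjCLE.toContinuousLinearMap.hasFDerivAt
      (x := Wf τ)).comp_hasDerivAt τ (hW' τ)
    convert this using 1 <;> rfl
  have hre : ∀ τ : ℝ, HasDerivAt (fun τ => (Wf τ * (starRingEnd ℂ) (Wf τ)).re)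
      ((-(G τ) * (starRingEnd ℂ) (Wf τ) + Wf τ * (starRingEnd ℂ) (-(G τ))).re) τ := by
    intro τ
    have hmul := (hW' τ).mul (hconj τ)
    have := (Complex.reCLM.hasFDerivAt
      (x := Wf τ * (starRingEnd ℂ) (Wf τ))).comp_hasDerivAt τ hmul
    convert this using 1 <;> rfl
  have hkey : ∀ s : ℝ, (-(G s) * (starRingEnd ℂ) (Wf s) + Wf s * (starRingEnd ℂ) (-(G s))).re
      = -2 * (G s * (starRingEnd ℂ) (Wf s)).re := by
    intro s
    simp only [Complex.add_re, Complex.mul_re, Complex.neg_re, Complex.neg_im,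
      Complex.conj_re, Complex.conj_im, map_neg]
    ring
  have hint : IntervalIntegrable (fun s => -2 * (G s * (starRingEnd ℂ) (Wf s)).re)
      volume 0 t := by
    apply Continuous.intervalIntegrable
    have : Continuous (fun s => (G s * (starRingEnd ℂ) (Wf s)).re) :=
      Complex.continuous_re.comp (hG.mul (Complex.continuous_conj.comp hWcont))
    exact continuous_const.mul this
  have hftc := intervalIntegral.integral_eq_sub_of_hasDerivAt
    (f := fun τ => (Wf τ * (starRingEnd ℂ) (Wf τ)).re)
    (f' := fun s => -2 * (G s * (starRingEnd ℂ) (Wf s)).re)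
    (fun x _ => by
      have := hre x
      rw [hkey x] at this
      exact this) hint
  have hW0 : Wf 0 = 0 := by
    simp [hWf, intervalIntegral.integral_same]
  have hz : ∀ z : ℂ, (z * (starRingEnd ℂ) z).re = ‖z‖^2 := by
    intro z
    rw [Complex.mul_conj, Complex.ofReal_re, Complex.normSq_eq_norm_sq]
  have h0 : (Wf 0 * (starRingEnd ℂ) (Wf 0)).re = 0 := by rw [hW0]; simp
  calc ‖-(∫ s in (0:ℝ)..t, G s)‖^2 = ‖Wf t‖^2 := rfl
    _ = (Wf t * (starRingEnd ℂ) (Wf t)).re := (hz _).symm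
    _ = (Wf t * (starRingEnd ℂ) (Wf t)).re - (Wf 0 * (starRingEnd ℂ) (Wf 0)).re := by
        rw [h0]; ring
    _ = ∫ s in (0:ℝ)..t, -2 * (G s * (starRingEnd ℂ) (Wf s)).re := hftc.symm
    _ = ∫ s in (0:ℝ)..t, (-2) * (G s * (starRingEnd ℂ) (-(∫ r in (0:ℝ)..s, G r))).re := rfl
end FTC
set_option maxHeartbeats 2000000 in
/-- weak–strong uniqueness: if `u` is a weak solution in
`L¹([0,T], w^{1,∞}) ∩ L^∞([0,T], V_{1/3})` and `v` is any weak solution in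
`L^∞([0,T], V_{1/3})` with the same initial data, then `u = v` on `[0,T]`. -/
theorem sabra_weak_strong_uniqueness
    (a b c k0 lam : ℝ) (hk0 : 0 < k0) (hlam : 1 < lam) (habc : a + b + c = 0)
    (T : ℝ) (hT : 0 < T)
    (uin f : ℤ → ℂ)
    (huin0 : ∀ n : ℤ, n ≤ 0 → uin n = 0) (hf0 : ∀ n : ℤ, n ≤ 0 → f n = 0)
    (huin : Summable fun n : ℕ => ‖uin ((n : ℤ) + 1)‖ ^ 2)
    (hf : Summable fun n : ℕ => ‖f ((n : ℤ) + 1)‖ ^ 2)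
    (u v : ℝ → ℤ → ℂ)
    (hu : IsWeakSolution a b c k0 lam T uin f u)
    (hv : IsWeakSolution a b c k0 lam T uin f v)
    -- u ∈ L¹([0,T], w^{1,∞})
    (hubdd : ∀ t ∈ Set.Icc (0 : ℝ) T,
      BddAbove (Set.range fun n : ℕ => kk k0 lam ((n : ℤ) + 1) * ‖u t ((n : ℤ) + 1)‖))
    (huL1 : MeasureTheory.IntegrableOn (fun t => W1 k0 lam (u t)) (Set.Icc (0 : ℝ) T))
    -- u, v ∈ L^∞([0,T], V_{1/3})
    (huV13 : LinftyV13 k0 lam T u)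
    (hvV13 : LinftyV13 k0 lam T v) :
    ∀ t ∈ Set.Icc (0 : ℝ) T, u t = v t := by
  have hu0 := hu.1
  have hv0 := hv.1
  obtain ⟨Mu, hMu⟩ := hu.2.1
  obtain ⟨Mv, hMv⟩ := hv.2.1
  have hucont := hu.2.2.1
  have hvcont := hv.2.2.1
  obtain ⟨Ku, hKu⟩ := huV13
  obtain ⟨Kv, hKv⟩ := hvV13
  have hlam0 : (0:ℝ) < lam := lt_trans one_pos hlam
  set κ : ℝ := |a| + |b| + |c| with hκdef
  have hκ0 : 0 ≤ κ := by positivity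
  set MH : ℝ := 2*(Mu + Mv) with hMHdef
  set MV : ℝ := 2*(Ku + Kv) with hMVdef
  set Wb : ℝ → ℝ := fun r => W1 k0 lam (u r) with hWbdef
  -- W1 facts
  have hWb_nonneg : ∀ r ∈ Set.Icc (0:ℝ) T, 0 ≤ Wb r := by
    intro r hr
    have h0 := le_ciSup (hubdd r hr) 0
    refine le_trans ?_ h0
    exact mul_nonneg (le_of_lt (kk_pos hk0 hlam _)) (norm_nonneg _)
  have hWb_all : ∀ r ∈ Set.Icc (0:ℝ) T, ∀ j : ℤ, kk k0 lam j * ‖u r j‖ ≤ Wb r := by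
    intro r hr j
    rcases le_or_gt j 0 with hj | hj
    · rw [hu0 r j hj]
      simpa using hWb_nonneg r hr
    · have hn : (((j-1).toNat : ℤ)) + 1 = j := by
        have := Int.toNat_of_nonneg (by omega : (0:ℤ) ≤ j - 1); omega
      have h := le_ciSup (hubdd r hr) (j-1).toNat
      rw [hn] at h
      exact h
  -- summability of the square differences
  have hsq_w : ∀ r ∈ Set.Icc (0:ℝ) T,
      (Summable fun n : ℕ => ‖u r ((n:ℤ)+1) - v r ((n:ℤ)+1)‖^2) ∧
      (∑' n : ℕ, ‖u r ((n:ℤ)+1) - v r ((n:ℤ)+1)‖^2) ≤ MH := by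
    intro r hr
    have hp : ∀ n : ℕ, ‖u r ((n:ℤ)+1) - v r ((n:ℤ)+1)‖^2
        ≤ 2*‖u r ((n:ℤ)+1)‖^2 + 2*‖v r ((n:ℤ)+1)‖^2 := by
      intro n
      have h1 : ‖u r ((n:ℤ)+1) - v r ((n:ℤ)+1)‖ ≤ ‖u r ((n:ℤ)+1)‖ + ‖v r ((n:ℤ)+1)‖ :=
        norm_sub_le _ _
      nlinarith [norm_nonneg (u r ((n:ℤ)+1) - v r ((n:ℤ)+1)), norm_nonneg (u r ((n:ℤ)+1)),
        norm_nonneg (v r ((n:ℤ)+1)), sq_nonneg (‖u r ((n:ℤ)+1)‖ - ‖v r ((n:ℤ)+1)‖)]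
    have hmaj : Summable (fun n : ℕ => 2*‖u r ((n:ℤ)+1)‖^2 + 2*‖v r ((n:ℤ)+1)‖^2) :=
      ((hMu r hr).1.mul_left 2).add ((hMv r hr).1.mul_left 2)
    have hs : Summable fun n : ℕ => ‖u r ((n:ℤ)+1) - v r ((n:ℤ)+1)‖^2 :=
      Summable.of_nonneg_of_le (fun n => sq_nonneg _) hp hmaj
    refine ⟨hs, ?_⟩
    calc (∑' n : ℕ, ‖u r ((n:ℤ)+1) - v r ((n:ℤ)+1)‖^2)
        ≤ ∑' n : ℕ, (2*‖u r ((n:ℤ)+1)‖^2 + 2*‖v r ((n:ℤ)+1)‖^2) := Summable.tsum_le_tsum hp hs hmaj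
      _ = 2*(∑' n : ℕ, ‖u r ((n:ℤ)+1)‖^2) + 2*(∑' n : ℕ, ‖v r ((n:ℤ)+1)‖^2) := by
          rw [Summable.tsum_add ((hMu r hr).1.mul_left 2) ((hMv r hr).1.mul_left 2),
            tsum_mul_left, tsum_mul_left]
      _ ≤ 2*Mu + 2*Mv := by
          have h1 := (hMu r hr).2; have h2 := (hMv r hr).2
          gcongr
      _ = MH := by rw [hMHdef]; ring
  have hq_w : ∀ r ∈ Set.Icc (0:ℝ) T,
      (Summable fun n : ℕ =>
        (kk k0 lam ((n:ℤ)+1)) ^ ((2:ℝ)/3) * ‖u r ((n:ℤ)+1) - v r ((n:ℤ)+1)‖^2) ∧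
      (∑' n : ℕ, (kk k0 lam ((n:ℤ)+1)) ^ ((2:ℝ)/3) * ‖u r ((n:ℤ)+1) - v r ((n:ℤ)+1)‖^2) ≤ MV := by
    intro r hr
    have hp : ∀ n : ℕ, (kk k0 lam ((n:ℤ)+1)) ^ ((2:ℝ)/3) * ‖u r ((n:ℤ)+1) - v r ((n:ℤ)+1)‖^2
        ≤ 2*((kk k0 lam ((n:ℤ)+1)) ^ ((2:ℝ)/3) * ‖u r ((n:ℤ)+1)‖^2)
          + 2*((kk k0 lam ((n:ℤ)+1)) ^ ((2:ℝ)/3) * ‖v r ((n:ℤ)+1)‖^2) := by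
      intro n
      have h1 : ‖u r ((n:ℤ)+1) - v r ((n:ℤ)+1)‖ ≤ ‖u r ((n:ℤ)+1)‖ + ‖v r ((n:ℤ)+1)‖ :=
        norm_sub_le _ _
      have hkn : (0:ℝ) ≤ (kk k0 lam ((n:ℤ)+1)) ^ ((2:ℝ)/3) :=
        Real.rpow_nonneg (le_of_lt (kk_pos hk0 hlam _)) _
      have h2 : ‖u r ((n:ℤ)+1) - v r ((n:ℤ)+1)‖^2
          ≤ 2*‖u r ((n:ℤ)+1)‖^2 + 2*‖v r ((n:ℤ)+1)‖^2 := by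
        nlinarith [norm_nonneg (u r ((n:ℤ)+1) - v r ((n:ℤ)+1)), norm_nonneg (u r ((n:ℤ)+1)),
          norm_nonneg (v r ((n:ℤ)+1)), sq_nonneg (‖u r ((n:ℤ)+1)‖ - ‖v r ((n:ℤ)+1)‖)]
      nlinarith [mul_le_mul_of_nonneg_left h2 hkn]
    have hmaj : Summable (fun n : ℕ =>
        2*((kk k0 lam ((n:ℤ)+1)) ^ ((2:ℝ)/3) * ‖u r ((n:ℤ)+1)‖^2)
          + 2*((kk k0 lam ((n:ℤ)+1)) ^ ((2:ℝ)/3) * ‖v r ((n:ℤ)+1)‖^2)) :=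
      ((hKu r hr).1.mul_left 2).add ((hKv r hr).1.mul_left 2)
    have hnn : ∀ n : ℕ, (0:ℝ) ≤ (kk k0 lam ((n:ℤ)+1)) ^ ((2:ℝ)/3)
        * ‖u r ((n:ℤ)+1) - v r ((n:ℤ)+1)‖^2 := by
      intro n
      exact mul_nonneg (Real.rpow_nonneg (le_of_lt (kk_pos hk0 hlam _)) _) (sq_nonneg _)
    have hs : Summable fun n : ℕ =>
        (kk k0 lam ((n:ℤ)+1)) ^ ((2:ℝ)/3) * ‖u r ((n:ℤ)+1) - v r ((n:ℤ)+1)‖^2 :=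
      Summable.of_nonneg_of_le hnn hp hmaj
    refine ⟨hs, ?_⟩
    calc (∑' n : ℕ, (kk k0 lam ((n:ℤ)+1)) ^ ((2:ℝ)/3) * ‖u r ((n:ℤ)+1) - v r ((n:ℤ)+1)‖^2)
        ≤ ∑' n : ℕ, (2*((kk k0 lam ((n:ℤ)+1)) ^ ((2:ℝ)/3) * ‖u r ((n:ℤ)+1)‖^2)
          + 2*((kk k0 lam ((n:ℤ)+1)) ^ ((2:ℝ)/3) * ‖v r ((n:ℤ)+1)‖^2)) :=
          Summable.tsum_le_tsum hp hs hmaj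
      _ = 2*(∑' n : ℕ, (kk k0 lam ((n:ℤ)+1)) ^ ((2:ℝ)/3) * ‖u r ((n:ℤ)+1)‖^2)
          + 2*(∑' n : ℕ, (kk k0 lam ((n:ℤ)+1)) ^ ((2:ℝ)/3) * ‖v r ((n:ℤ)+1)‖^2) := by
          rw [Summable.tsum_add ((hKu r hr).1.mul_left 2) ((hKv r hr).1.mul_left 2),
            tsum_mul_left, tsum_mul_left]
      _ ≤ 2*Ku + 2*Kv := by
          gcongr
          · exact (hKu r hr).2
          · exact (hKv r hr).2
      _ = MV := by rw [hMVdef]; ring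
  -- the core quantities
  set yy : ℝ → ℝ := fun r => ∑' n : ℕ, ‖u r ((n:ℤ)+1) - v r ((n:ℤ)+1)‖^2 with hyydef
  set gg : ℝ → ℝ := fun s => ∑' n : ℕ,
    -2 * ((sB a b c k0 lam (u s) ((n:ℤ)+1) - sB a b c k0 lam (v s) ((n:ℤ)+1))
      * (starRingEnd ℂ) (u s ((n:ℤ)+1) - v s ((n:ℤ)+1))).re with hggdef
  have hcore : ∀ r ∈ Set.Icc (0:ℝ) T,
      Summable (fun n : ℕ => -2 * ((sB a b c k0 lam (u r) ((n:ℤ)+1)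
          - sB a b c k0 lam (v r) ((n:ℤ)+1))
        * (starRingEnd ℂ) (u r ((n:ℤ)+1) - v r ((n:ℤ)+1))).re)
      ∧ (∑' n : ℕ, |(-2 * ((sB a b c k0 lam (u r) ((n:ℤ)+1) - sB a b c k0 lam (v r) ((n:ℤ)+1))
        * (starRingEnd ℂ) (u r ((n:ℤ)+1) - v r ((n:ℤ)+1))).re)|)
        ≤ 2*(κ * Real.sqrt MV * MV) + 8*lam*κ*(Wb r)*MH
      ∧ gg r ≤ 8*lam*κ*(Wb r)*(yy r) := by
    intro r hr
    exact core_estimate a b c k0 lam MH MV (Wb r) hk0 hlam habc (u r) (v r)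
      (hu0 r) (hv0 r) (hWb_nonneg r hr) (hsq_w r hr).1 (hsq_w r hr).2
      (hq_w r hr).1 (hq_w r hr).2 (hWb_all r hr)
  -- clamped quantities
  set clamp : ℝ → ℝ := fun s => max 0 (min s T) with hclampdef
  have hclamp_cont : Continuous clamp :=
    continuous_const.max (continuous_id.min continuous_const)
  have hclamp_mem : ∀ s : ℝ, clamp s ∈ Set.Icc (0:ℝ) T :=
    fun s => ⟨le_max_left _ _, max_le (le_of_lt hT) (min_le_right _ _)⟩
  have hclamp_id : ∀ s ∈ Set.Icc (0:ℝ) T, clamp s = s := by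
    intro s hs
    rw [hclampdef]
    simp only
    rw [min_eq_left hs.2, max_eq_right hs.1]
  set G : ℕ → ℝ → ℂ := fun m s => sB a b c k0 lam (u (clamp s)) ((m:ℤ)+1)
    - sB a b c k0 lam (v (clamp s)) ((m:ℤ)+1) with hGdef
  have hGcont : ∀ m : ℕ, Continuous (G m) := by
    intro m
    have h1 : Continuous (fun s => sB a b c k0 lam (u (clamp s)) ((m:ℤ)+1)) :=
      (continuousOn_sB hucont ((m:ℤ)+1)).comp_continuous hclamp_cont hclamp_mem
    have h2 : Continuous (fun s => sB a b c k0 lam (v (clamp s)) ((m:ℤ)+1)) :=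
      (continuousOn_sB hvcont ((m:ℤ)+1)).comp_continuous hclamp_cont hclamp_mem
    exact h1.sub h2
  set Wfn : ℕ → ℝ → ℂ := fun m t => -(∫ s in (0:ℝ)..t, G m s) with hWfdef
  have hWfn_cont : ∀ m : ℕ, Continuous (Wfn m) := by
    intro m
    refine continuous_iff_continuousAt.mpr (fun τ => ?_)
    have hD : HasDerivAt (fun τ => ∫ s in (0:ℝ)..τ, G m s) (G m τ) τ :=
      intervalIntegral.integral_hasDerivAt_right ((hGcont m).intervalIntegrable _ _)
        ((hGcont m).stronglyMeasurableAtFilter _ _) (hGcont m).continuousAt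
    exact (hD.neg).continuousAt
  have hWf_eq : ∀ m : ℕ, ∀ r ∈ Set.Icc (0:ℝ) T, Wfn m r = u r ((m:ℤ)+1) - v r ((m:ℤ)+1) := by
    intro m r hr
    have h1 := mode_eq hu m hr
    have h2 := mode_eq hv m hr
    have hsubIcc : Set.uIcc (0:ℝ) r ⊆ Set.Icc (0:ℝ) T := by
      rw [Set.uIcc_of_le hr.1]
      exact Set.Icc_subset_Icc le_rfl hr.2
    have hIu : IntervalIntegrable (fun s => sB a b c k0 lam (u s) ((m:ℤ)+1)) volume 0 r :=
      ContinuousOn.intervalIntegrable ((continuousOn_sB hucont ((m:ℤ)+1)).mono hsubIcc)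
    have hIv : IntervalIntegrable (fun s => sB a b c k0 lam (v s) ((m:ℤ)+1)) volume 0 r :=
      ContinuousOn.intervalIntegrable ((continuousOn_sB hvcont ((m:ℤ)+1)).mono hsubIcc)
    have hcongr : (∫ s in (0:ℝ)..r, G m s)
        = ∫ s in (0:ℝ)..r, (sB a b c k0 lam (u s) ((m:ℤ)+1)
          - sB a b c k0 lam (v s) ((m:ℤ)+1)) := by
      refine intervalIntegral.integral_congr (fun s hs => ?_)
      have hsm : s ∈ Set.Icc (0:ℝ) T := hsubIcc hs
      rw [hGdef]
      simp only
      rw [hclamp_id s hsm]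
    rw [hWfdef]
    simp only
    rw [hcongr, intervalIntegral.integral_sub hIu hIv]
    linear_combination h2 - h1
  -- FTC for each mode
  have hWfsq : ∀ (m : ℕ) (t : ℝ), ‖Wfn m t‖^2
      = ∫ s in (0:ℝ)..t, (-2) * (G m s * (starRingEnd ℂ) (Wfn m s)).re :=
    fun m t => normsq_primitive (G m) (hGcont m) t
  -- DCT: key identity
  have key : ∀ t ∈ Set.Icc (0:ℝ) T, yy t = ∫ s in Set.Ioc (0:ℝ) t, gg s := by
    intro t ht
    have hline : ∀ N : ℕ, (∑ n ∈ Finset.range N, ‖Wfn n t‖^2)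
        = ∫ s in Set.Ioc (0:ℝ) t, (∑ n ∈ Finset.range N,
            (-2) * (G n s * (starRingEnd ℂ) (Wfn n s)).re) := by
      intro N
      have hint : ∀ n ∈ Finset.range N, IntervalIntegrable
          (fun s => (-2) * (G n s * (starRingEnd ℂ) (Wfn n s)).re) volume 0 t := by
        intro n _
        apply Continuous.intervalIntegrable
        exact continuous_const.mul (Complex.continuous_re.comp
          ((hGcont n).mul (Complex.continuous_conj.comp (hWfn_cont n))))
      rw [← intervalIntegral.integral_of_le ht.1,
        intervalIntegral.integral_finset_sum hint]
      exact Finset.sum_congr rfl (fun n _ => hWfsq n t)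
    -- limit of LHS
    have hLHS : Filter.Tendsto (fun N => ∑ n ∈ Finset.range N, ‖Wfn n t‖^2)
        Filter.atTop (nhds (yy t)) := by
      refine (((hsq_w t ht).1.hasSum).tendsto_sum_nat).congr (fun N => ?_)
      exact Finset.sum_congr rfl (fun n _ => by rw [hWf_eq n t ht])
    -- limit of RHS by dominated convergence
    set bound : ℝ → ℝ := fun s => 2*(κ * Real.sqrt MV * MV) + (8*lam*κ*MH) * (Wb s)
      with hbounddef
    have hIocsub : Set.Ioc (0:ℝ) t ⊆ Set.Icc (0:ℝ) T :=
      fun s hs => ⟨le_of_lt hs.1, le_trans hs.2 ht.2⟩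
    have hbound_int : MeasureTheory.Integrable bound
        (MeasureTheory.volume.restrict (Set.Ioc (0:ℝ) t)) := by
      apply MeasureTheory.Integrable.add
      · exact MeasureTheory.integrableOn_const measure_Ioc_lt_top.ne
      · exact (huL1.mono_set hIocsub).const_mul _
    have hRHS : Filter.Tendsto (fun N => ∫ s in Set.Ioc (0:ℝ) t, (∑ n ∈ Finset.range N,
        (-2) * (G n s * (starRingEnd ℂ) (Wfn n s)).re))
        Filter.atTop (nhds (∫ s in Set.Ioc (0:ℝ) t, gg s)) := by
      refine MeasureTheory.tendsto_integral_of_dominated_convergence bound ?_ hbound_int ?_ ?_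
      · intro N
        apply Continuous.aestronglyMeasurable
        apply continuous_finset_sum
        intro n _
        exact continuous_const.mul (Complex.continuous_re.comp
          ((hGcont n).mul (Complex.continuous_conj.comp (hWfn_cont n))))
      · intro N
        rw [MeasureTheory.ae_restrict_iff' measurableSet_Ioc]
        refine MeasureTheory.ae_of_all _ (fun s hs => ?_)
        have hsm : s ∈ Set.Icc (0:ℝ) T := hIocsub hs
        have hterm : ∀ n : ℕ, (-2) * (G n s * (starRingEnd ℂ) (Wfn n s)).re
            = -2 * ((sB a b c k0 lam (u s) ((n:ℤ)+1) - sB a b c k0 lam (v s) ((n:ℤ)+1))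
              * (starRingEnd ℂ) (u s ((n:ℤ)+1) - v s ((n:ℤ)+1))).re := by
          intro n
          rw [hWf_eq n s hsm, hGdef]
          simp only
          rw [hclamp_id s hsm]
        calc ‖∑ n ∈ Finset.range N, (-2) * (G n s * (starRingEnd ℂ) (Wfn n s)).re‖
            = |∑ n ∈ Finset.range N, (-2) * (G n s * (starRingEnd ℂ) (Wfn n s)).re| :=
              Real.norm_eq_abs _
          _ ≤ ∑ n ∈ Finset.range N, |(-2) * (G n s * (starRingEnd ℂ) (Wfn n s)).re| :=
              Finset.abs_sum_le_sum_abs _ _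
          _ = ∑ n ∈ Finset.range N, |(-2 * ((sB a b c k0 lam (u s) ((n:ℤ)+1)
              - sB a b c k0 lam (v s) ((n:ℤ)+1))
              * (starRingEnd ℂ) (u s ((n:ℤ)+1) - v s ((n:ℤ)+1))).re)| :=
              Finset.sum_congr rfl (fun n _ => by rw [hterm n])
          _ ≤ ∑' n : ℕ, |(-2 * ((sB a b c k0 lam (u s) ((n:ℤ)+1)
              - sB a b c k0 lam (v s) ((n:ℤ)+1))
              * (starRingEnd ℂ) (u s ((n:ℤ)+1) - v s ((n:ℤ)+1))).re)| :=
              Summable.sum_le_tsum _ (fun n _ => abs_nonneg _) ((hcore s hsm).1.abs)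
          _ ≤ 2*(κ * Real.sqrt MV * MV) + 8*lam*κ*(Wb s)*MH := (hcore s hsm).2.1
          _ = bound s := by rw [hbounddef]; ring
      · rw [MeasureTheory.ae_restrict_iff' measurableSet_Ioc]
        refine MeasureTheory.ae_of_all _ (fun s hs => ?_)
        have hsm : s ∈ Set.Icc (0:ℝ) T := hIocsub hs
        have hterm : ∀ n : ℕ, (-2) * (G n s * (starRingEnd ℂ) (Wfn n s)).re
            = -2 * ((sB a b c k0 lam (u s) ((n:ℤ)+1)
              - sB a b c k0 lam (v s) ((n:ℤ)+1))
              * (starRingEnd ℂ) (u s ((n:ℤ)+1) - v s ((n:ℤ)+1))).re := by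
          intro n
          rw [hWf_eq n s hsm, hGdef]
          simp only
          rw [hclamp_id s hsm]
        refine (((hcore s hsm).1.hasSum).tendsto_sum_nat).congr (fun N => ?_)
        exact Finset.sum_congr rfl (fun n _ => (hterm n).symm)
    have := Filter.Tendsto.congr (fun N => hline N) hLHS
    exact tendsto_nhds_unique this hRHS
  -- integrability of gg
  have hgg_bound : ∀ s ∈ Set.Icc (0:ℝ) T,
      ‖gg s‖ ≤ 2*(κ * Real.sqrt MV * MV) + (8*lam*κ*MH) * (Wb s) := by
    intro s hsm
    have h1 : ‖gg s‖ ≤ ∑' n : ℕ, ‖(-2 * ((sB a b c k0 lam (u s) ((n:ℤ)+1)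
        - sB a b c k0 lam (v s) ((n:ℤ)+1))
        * (starRingEnd ℂ) (u s ((n:ℤ)+1) - v s ((n:ℤ)+1))).re)‖ := by
      apply norm_tsum_le_tsum_norm
      have h := (hcore s hsm).1.abs
      have heq : (fun n : ℕ => ‖(-2 * ((sB a b c k0 lam (u s) ((n:ℤ)+1)
          - sB a b c k0 lam (v s) ((n:ℤ)+1))
          * (starRingEnd ℂ) (u s ((n:ℤ)+1) - v s ((n:ℤ)+1))).re)‖)
          = fun n : ℕ => |(-2 * ((sB a b c k0 lam (u s) ((n:ℤ)+1)
          - sB a b c k0 lam (v s) ((n:ℤ)+1))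
          * (starRingEnd ℂ) (u s ((n:ℤ)+1) - v s ((n:ℤ)+1))).re)| :=
        funext (fun n => Real.norm_eq_abs _)
      rw [heq]
      exact h
    calc ‖gg s‖ ≤ _ := h1
      _ = ∑' n : ℕ, |(-2 * ((sB a b c k0 lam (u s) ((n:ℤ)+1)
          - sB a b c k0 lam (v s) ((n:ℤ)+1))
          * (starRingEnd ℂ) (u s ((n:ℤ)+1) - v s ((n:ℤ)+1))).re)| :=
          tsum_congr (fun n => Real.norm_eq_abs _)
      _ ≤ 2*(κ * Real.sqrt MV * MV) + 8*lam*κ*(Wb s)*MH := (hcore s hsm).2.1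
      _ = 2*(κ * Real.sqrt MV * MV) + (8*lam*κ*MH) * (Wb s) := by ring
  have hgg_meas : MeasureTheory.AEStronglyMeasurable gg
      (MeasureTheory.volume.restrict (Set.Ioc (0:ℝ) T)) := by
    refine aestronglyMeasurable_of_tendsto_ae (f := fun N s => ∑ n ∈ Finset.range N,
      (-2) * (G n s * (starRingEnd ℂ) (Wfn n s)).re) (u := Filter.atTop) ?_ ?_
    · intro N
      apply Continuous.aestronglyMeasurable
      apply continuous_finset_sum
      intro n _
      exact continuous_const.mul (Complex.continuous_re.comp
        ((hGcont n).mul (Complex.continuous_conj.comp (hWfn_cont n))))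
    · rw [MeasureTheory.ae_restrict_iff' measurableSet_Ioc]
      refine MeasureTheory.ae_of_all _ (fun s hs => ?_)
      have hsm : s ∈ Set.Icc (0:ℝ) T := ⟨le_of_lt hs.1, hs.2⟩
      have hterm : ∀ n : ℕ, (-2) * (G n s * (starRingEnd ℂ) (Wfn n s)).re
          = -2 * ((sB a b c k0 lam (u s) ((n:ℤ)+1)
            - sB a b c k0 lam (v s) ((n:ℤ)+1))
            * (starRingEnd ℂ) (u s ((n:ℤ)+1) - v s ((n:ℤ)+1))).re := by
        intro n
        rw [hWf_eq n s hsm, hGdef]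
        simp only
        rw [hclamp_id s hsm]
      refine (((hcore s hsm).1.hasSum).tendsto_sum_nat).congr (fun N => ?_)
      exact Finset.sum_congr rfl (fun n _ => (hterm n).symm)
  have hgg_int : MeasureTheory.IntegrableOn gg (Set.Ioc (0:ℝ) T) := by
    refine MeasureTheory.Integrable.mono'
      (g := fun s => 2*(κ * Real.sqrt MV * MV) + (8*lam*κ*MH) * (Wb s)) ?_ hgg_meas ?_
    · apply MeasureTheory.Integrable.add
      · exact MeasureTheory.integrableOn_const measure_Ioc_lt_top.ne
      · exact (huL1.mono_set Set.Ioc_subset_Icc_self).const_mul _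
    · rw [MeasureTheory.ae_restrict_iff' measurableSet_Ioc]
      refine MeasureTheory.ae_of_all _ (fun s hs => ?_)
      exact hgg_bound s ⟨le_of_lt hs.1, hs.2⟩
  have hgg_int_Icc : MeasureTheory.IntegrableOn gg (Set.Icc (0:ℝ) T) :=
    (integrableOn_Icc_iff_integrableOn_Ioc).mpr hgg_int
  -- continuity and nonnegativity of yy
  have hyy_cont : ContinuousOn yy (Set.Icc (0:ℝ) T) := by
    refine ContinuousOn.congr (intervalIntegral.continuousOn_primitive hgg_int_Icc)
      (fun r hr => key r hr)
  have hyy_nonneg : ∀ r ∈ Set.Icc (0:ℝ) T, 0 ≤ yy r :=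
    fun r _ => tsum_nonneg (fun n => sq_nonneg _)
  -- Gronwall setup
  set φf : ℝ → ℝ := fun s => (8*lam*κ) * (Wb s) with hφfdef
  have hφ_int : MeasureTheory.IntegrableOn φf (Set.Icc (0:ℝ) T) := huL1.const_mul _
  have hφ_nonneg : ∀ s ∈ Set.Icc (0:ℝ) T, 0 ≤ φf s := by
    intro s hs
    have := hWb_nonneg s hs
    rw [hφfdef]
    positivity
  have hφyy_int : MeasureTheory.IntegrableOn (fun s => φf s * yy s) (Set.Icc (0:ℝ) T) := by
    refine MeasureTheory.Integrable.mono' ((hφ_int.norm).const_mul MH) ?_ ?_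
    · exact (hφ_int.aestronglyMeasurable).mul
        (hyy_cont.aestronglyMeasurable measurableSet_Icc)
    · rw [MeasureTheory.ae_restrict_iff' measurableSet_Icc]
      refine MeasureTheory.ae_of_all _ (fun s hs => ?_)
      have h1 : 0 ≤ yy s := hyy_nonneg s hs
      have h2 : yy s ≤ MH := (hsq_w s hs).2
      calc ‖φf s * yy s‖ = ‖φf s‖ * ‖yy s‖ := norm_mul _ _
        _ ≤ ‖φf s‖ * MH := by
            apply mul_le_mul_of_nonneg_left _ (norm_nonneg _)
            rw [Real.norm_eq_abs, _root_.abs_of_nonneg h1]; exact h2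
        _ = MH * ‖φf s‖ := by ring
  have hineq : ∀ t ∈ Set.Icc (0:ℝ) T, yy t ≤ ∫ s in Set.Ioc (0:ℝ) t, φf s * yy s := by
    intro t ht
    rw [key t ht]
    have hIocsub : Set.Ioc (0:ℝ) t ⊆ Set.Icc (0:ℝ) T :=
      fun s hs => ⟨le_of_lt hs.1, le_trans hs.2 ht.2⟩
    refine MeasureTheory.setIntegral_mono_on
      (hgg_int.mono_set (Set.Ioc_subset_Ioc le_rfl ht.2))
      (hφyy_int.mono_set hIocsub) measurableSet_Ioc (fun s hs => ?_)
    have hsm : s ∈ Set.Icc (0:ℝ) T := hIocsub hs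
    calc gg s ≤ 8*lam*κ*(Wb s)*(yy s) := (hcore s hsm).2.2
      _ = φf s * yy s := by rw [hφfdef]
  have hzero := gronwall_zero T yy φf hyy_cont hyy_nonneg hφ_int hφ_nonneg hineq
  -- conclusion
  intro t ht
  funext j
  rcases le_or_gt j 0 with hj | hj
  · rw [hu0 t j hj, hv0 t j hj]
  · have hn : (((j-1).toNat : ℤ)) + 1 = j := by
      have := Int.toNat_of_nonneg (by omega : (0:ℤ) ≤ j - 1); omega
    have hterm : ‖u t (((j-1).toNat : ℤ) + 1) - v t (((j-1).toNat : ℤ) + 1)‖^2 ≤ yy t :=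
      Summable.le_tsum (hsq_w t ht).1 _ (fun _ _ => sq_nonneg _)
    rw [hn, hzero t ht] at hterm
    have h2 : ‖u t j - v t j‖^2 = 0 := le_antisymm hterm (sq_nonneg _)
    have h0 : ‖u t j - v t j‖ = 0 := by
      by_contra hne
      have hpos : 0 < ‖u t j - v t j‖ := lt_of_le_of_ne (norm_nonneg _) (Ne.symm hne)
      nlinarith [h2]
    exact sub_eq_zero.mp (norm_eq_zero.mp h0)
end

section
/- With λ > 1 and ε = (√5 − 1)/2 (so ε² = 1 − ε), the identity E_{d} as a function vanishes for the cubic invariant structure: for any finitely supported complex sequence (a_n) evolving by da_n/dt = −i k₀ ε (λ√ε)^n (λ√ε a_{n+2} a_{n+1} + conj(a_{n+1}) a_{n−1} + (λ√ε)^{−1} conj(a_{n−1}) a_{n−2}), the Hamiltonian H = Σ_n ε k₀ (λ√ε)^n (a_{n+1} a_n conj(a_{n−1}) + c.c.) is conserved: dH/dt = 0. -/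
open Complex

private def sabraG (b : ℤ → ℂ) (mu K e : ℝ) (m : ℕ) : ℝ :=
  2*K^2*e^2*( mu^(2*m+2) * (b (↑m+3) * b (↑m+2) * b ↑m * (starRingEnd ℂ) (b (↑m-1))).im
    + mu^(2*m) * (b (↑m+2) * b (↑m+1) * b (↑m-1) * (starRingEnd ℂ) (b (↑m-2))).im
    + mu^(2*m+1) * (b (↑m+2) * (b (↑m+1))^2 * (starRingEnd ℂ) (b (↑m-1))).im
    - mu^(2*m+1) * (b (↑m+2) * ((starRingEnd ℂ) (b ↑m))^2 * (b (↑m-1))).im )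

private lemma sabra_key0 (K e mu y : ℝ) (hmu : mu ≠ 0) (am2 am1 a0 a1 a2 a3 a4 : ℂ) :
    e * K * (y * mu) *
      (2 * (((-Complex.I * (K:ℂ) * (e:ℂ) * ((y * mu ^ 2 : ℝ) : ℂ) *
              ((mu : ℂ) * a4 * a3 + (starRingEnd ℂ) a3 * a1 + ((mu⁻¹ : ℝ) : ℂ) * (starRingEnd ℂ) a1 * a0)) * a1
            + a2 * (-Complex.I * (K:ℂ) * (e:ℂ) * ((y * mu : ℝ) : ℂ) *
              ((mu : ℂ) * a3 * a2 + (starRingEnd ℂ) a2 * a0 + ((mu⁻¹ : ℝ) : ℂ) * (starRingEnd ℂ) a0 * am1))) * (starRingEnd ℂ) a0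
            + a2 * a1 * (starRingEnd ℂ) (-Complex.I * (K:ℂ) * (e:ℂ) * ((y : ℝ) : ℂ) *
              ((mu : ℂ) * a2 * a1 + (starRingEnd ℂ) a1 * am1 + ((mu⁻¹ : ℝ) : ℂ) * (starRingEnd ℂ) am1 * am2))).re)
    = (2*K^2*e^2*( y^2*mu^4 * (a4*a3*a1*(starRingEnd ℂ) a0).im + y^2*mu^2*(a3*a2*a0*(starRingEnd ℂ) am1).im
        + y^2*mu^3*(a3*a2^2*(starRingEnd ℂ) a0).im - y^2*mu^3*(a3*((starRingEnd ℂ) a1)^2*a0).im ))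
    - (2*K^2*e^2*( y^2*mu^2*(a3*a2*a0*(starRingEnd ℂ) am1).im + y^2*(a2*a1*am1*(starRingEnd ℂ) am2).im
        + y^2*mu*(a2*a1^2*(starRingEnd ℂ) am1).im - y^2*mu*(a2*((starRingEnd ℂ) a0)^2*am1).im )) := by
  have h : mu * mu⁻¹ = 1 := mul_inv_cancel₀ hmu
  simp only [pow_two, Complex.star_def, map_mul, map_add, Complex.conj_conj, Complex.conj_I,
    map_neg, Complex.conj_ofReal, Complex.mul_re, Complex.mul_im, Complex.add_re, Complex.add_im,
    Complex.neg_re, Complex.neg_im, Complex.I_re, Complex.I_im, Complex.ofReal_re,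
    Complex.ofReal_im, Complex.conj_re, Complex.conj_im]
  field_simp
  ring

private lemma sabra_key (K e mu : ℝ) (hmu : mu ≠ 0) (b : ℤ → ℂ) (n : ℕ) :
    e * K * mu ^ ((n:ℤ)+1) *
      (2 * ((((-Complex.I * (K:ℂ) * (e:ℂ) * ((mu ^ ((n:ℤ)+2) : ℝ) : ℂ) *
              ((mu : ℂ) * b ((n:ℤ)+2+2) * b ((n:ℤ)+2+1)
                + (starRingEnd ℂ) (b ((n:ℤ)+2+1)) * b ((n:ℤ)+2-1)
                + ((mu⁻¹ : ℝ) : ℂ) * (starRingEnd ℂ) (b ((n:ℤ)+2-1)) * b ((n:ℤ)+2-2))) * b ((n:ℤ)+1)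
            + b ((n:ℤ)+2) * (-Complex.I * (K:ℂ) * (e:ℂ) * ((mu ^ ((n:ℤ)+1) : ℝ) : ℂ) *
              ((mu : ℂ) * b ((n:ℤ)+1+2) * b ((n:ℤ)+1+1)
                + (starRingEnd ℂ) (b ((n:ℤ)+1+1)) * b ((n:ℤ)+1-1)
                + ((mu⁻¹ : ℝ) : ℂ) * (starRingEnd ℂ) (b ((n:ℤ)+1-1)) * b ((n:ℤ)+1-2))))
              * (starRingEnd ℂ) (b (n:ℤ))
            + b ((n:ℤ)+2) * b ((n:ℤ)+1) * (starRingEnd ℂ) (-Complex.I * (K:ℂ) * (e:ℂ) * ((mu ^ (n:ℤ) : ℝ) : ℂ) *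
              ((mu : ℂ) * b ((n:ℤ)+2) * b ((n:ℤ)+1)
                + (starRingEnd ℂ) (b ((n:ℤ)+1)) * b ((n:ℤ)-1)
                + ((mu⁻¹ : ℝ) : ℂ) * (starRingEnd ℂ) (b ((n:ℤ)-1)) * b ((n:ℤ)-2)))).re))
    = sabraG b mu K e (n+1) - sabraG b mu K e n := by
  have e1 : ((n:ℤ)+2+2) = ((n:ℤ)+4) := by ring
  have e2 : ((n:ℤ)+2+1) = ((n:ℤ)+3) := by ring
  have e3 : ((n:ℤ)+2-1) = ((n:ℤ)+1) := by ring
  have e4 : ((n:ℤ)+2-2) = ((n:ℤ)) := by ring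
  have e5 : ((n:ℤ)+1+2) = ((n:ℤ)+3) := by ring
  have e6 : ((n:ℤ)+1+1) = ((n:ℤ)+2) := by ring
  have e7 : ((n:ℤ)+1-1) = ((n:ℤ)) := by ring
  have e8 : ((n:ℤ)+1-2) = ((n:ℤ)-1) := by ring
  have z0 : mu ^ ((n:ℤ)) = mu ^ (n:ℕ) := zpow_natCast mu n
  have z1 : mu ^ ((n:ℤ)+1) = mu ^ (n:ℕ) * mu := by
    rw [zpow_add₀ hmu, z0, zpow_one]
  have z2 : mu ^ ((n:ℤ)+2) = mu ^ (n:ℕ) * mu^2 := by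
    rw [show ((n:ℤ)+2) = ((n+2 : ℕ) : ℤ) by push_cast; ring, zpow_natCast, pow_add]
  rw [e1, e2, e3, e4, e5, e6, e7, e8, z0, z1, z2]
  simp only [sabraG]
  have c1 : ((↑(n+1):ℤ)+3) = ((n:ℤ)+4) := by push_cast; ring
  have c2 : ((↑(n+1):ℤ)+2) = ((n:ℤ)+3) := by push_cast; ring
  have c3 : ((↑(n+1):ℤ)+1) = ((n:ℤ)+2) := by push_cast; ring
  have c4 : ((↑(n+1):ℤ)) = ((n:ℤ)+1) := by push_cast; ring
  have c5 : ((↑(n+1):ℤ)-1) = ((n:ℤ)) := by push_cast; ring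
  have c6 : ((↑(n+1):ℤ)-2) = ((n:ℤ)-1) := by push_cast; ring
  rw [c1, c2, c3, c5, c6, c4]
  linear_combination sabra_key0 K e mu (mu^n) hmu (b ((n:ℤ)-2)) (b ((n:ℤ)-1)) (b (n:ℤ))
    (b ((n:ℤ)+1)) (b ((n:ℤ)+2)) (b ((n:ℤ)+3)) (b ((n:ℤ)+4))


/-- with `λ > 1` and `ε = (√5 - 1)/2` (the golden mean, `ε² = 1 - ε`),
for any (uniformly) finitely supported complex sequence `a_n(t)` evolving by
`da_n/dt = -i k₀ ε (λ√ε)^n (λ√ε a_{n+2} a_{n+1} + conj(a_{n+1}) a_{n-1}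
+ (λ√ε)^{-1} conj(a_{n-1}) a_{n-2})`, the Hamiltonian
`H = ∑_n ε k₀ (λ√ε)^n (a_{n+1} a_n conj(a_{n-1}) + c.c.)` is conserved. -/
theorem sabra_hamiltonian_conserved
    (k0 lam : ℝ) (hk0 : 0 < k0) (hlam : 1 < lam)
    (w : ℝ → ℤ → ℂ)
    (hb : ∀ t : ℝ, ∀ n : ℤ, n ≤ 0 → w t n = 0)
    (hfin : ∃ N : ℕ, ∀ t : ℝ, ∀ n : ℤ, (N : ℤ) < n → w t n = 0)
    (hode : ∀ t : ℝ, ∀ n : ℤ, 1 ≤ n →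
      HasDerivAt (fun s => w s n)
        (-Complex.I * (k0 : ℂ) * (((Real.sqrt 5 - 1) / 2 : ℝ) : ℂ) *
          (((lam * Real.sqrt ((Real.sqrt 5 - 1) / 2)) ^ n : ℝ) : ℂ) *
          ((((lam * Real.sqrt ((Real.sqrt 5 - 1) / 2)) : ℝ) : ℂ) * w t (n + 2) * w t (n + 1)
            + (starRingEnd ℂ) (w t (n + 1)) * w t (n - 1)
            + ((((lam * Real.sqrt ((Real.sqrt 5 - 1) / 2))⁻¹ : ℝ) : ℂ)) *
                (starRingEnd ℂ) (w t (n - 1)) * w t (n - 2))) t) :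
    ∀ t : ℝ,
      HasDerivAt
        (fun s => ∑' n : ℕ,
          ((Real.sqrt 5 - 1) / 2) * k0 *
            (lam * Real.sqrt ((Real.sqrt 5 - 1) / 2)) ^ ((n : ℤ) + 1) *
            (2 * (w s ((n : ℤ) + 2) * w s ((n : ℤ) + 1) *
              (starRingEnd ℂ) (w s (n : ℤ))).re))
        0 t := by
  obtain ⟨N, hN⟩ := hfin
  intro t
  have h5 : (1:ℝ) < Real.sqrt 5 := by
    have := Real.sqrt_lt_sqrt (by norm_num : (0:ℝ) ≤ 1) (by norm_num : (1:ℝ) < 5)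
    simpa using this
  have hε : (0:ℝ) < (Real.sqrt 5 - 1) / 2 := by linarith
  have hmu0 : (0:ℝ) < lam * Real.sqrt ((Real.sqrt 5 - 1) / 2) :=
    mul_pos (lt_trans one_pos hlam) (Real.sqrt_pos.mpr hε)
  set mu : ℝ := lam * Real.sqrt ((Real.sqrt 5 - 1) / 2) with hmudef
  set e : ℝ := (Real.sqrt 5 - 1) / 2 with hedef
  set d : ℤ → ℂ := fun m => if 1 ≤ m then
      -Complex.I * (k0:ℂ) * (e:ℂ) * ((mu ^ m : ℝ) : ℂ) *
        ((mu : ℂ) * w t (m+2) * w t (m+1) + (starRingEnd ℂ) (w t (m+1)) * w t (m-1)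
          + ((mu⁻¹ : ℝ) : ℂ) * (starRingEnd ℂ) (w t (m-1)) * w t (m-2))
    else 0 with hd_def
  have hd : ∀ m : ℤ, HasDerivAt (fun s => w s m) (d m) t := by
    intro m
    by_cases h1 : (1:ℤ) ≤ m
    · simp only [hd_def, if_pos h1]
      exact hode t m h1
    · simp only [hd_def, if_neg h1]
      exact (hasDerivAt_const t (0:ℂ)).congr_of_eventuallyEq
        (Filter.Eventually.of_forall fun s => hb s m (by omega))
  have hterm : ∀ n : ℕ, HasDerivAt
      (fun s => e * k0 * mu ^ ((n:ℤ)+1) *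
        (2 * (w s ((n:ℤ)+2) * w s ((n:ℤ)+1) * (starRingEnd ℂ) (w s (n:ℤ))).re))
      (e * k0 * mu ^ ((n:ℤ)+1) *
        (2 * ((d ((n:ℤ)+2) * w t ((n:ℤ)+1) + w t ((n:ℤ)+2) * d ((n:ℤ)+1)) * (starRingEnd ℂ) (w t (n:ℤ))
          + w t ((n:ℤ)+2) * w t ((n:ℤ)+1) * (starRingEnd ℂ) (d (n:ℤ))).re)) t := by
    intro n
    have hp : HasDerivAt
        (fun s => w s ((n:ℤ)+2) * w s ((n:ℤ)+1) * (starRingEnd ℂ) (w s (n:ℤ)))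
        ((d ((n:ℤ)+2) * w t ((n:ℤ)+1) + w t ((n:ℤ)+2) * d ((n:ℤ)+1)) * (starRingEnd ℂ) (w t (n:ℤ))
          + w t ((n:ℤ)+2) * w t ((n:ℤ)+1) * (starRingEnd ℂ) (d (n:ℤ))) t := by
      have h1 := ((hd ((n:ℤ)+2)).mul (hd ((n:ℤ)+1))).mul ((hd ((n:ℤ))).star)
      simpa only [Complex.star_def, Pi.mul_def] using h1
    have hre := Complex.reCLM.hasFDerivAt.comp_hasDerivAt t hp
    simp only [Function.comp_def, Complex.reCLM_apply] at hre
    exact (hre.const_mul (2:ℝ)).const_mul (e * k0 * mu ^ ((n:ℤ)+1))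
  have hsum := HasDerivAt.fun_sum (u := Finset.range N) (fun n _ => hterm n)
  have hfun : (fun s : ℝ => ∑' n : ℕ, e * k0 * mu ^ ((n:ℤ)+1) *
        (2 * (w s ((n:ℤ)+2) * w s ((n:ℤ)+1) * (starRingEnd ℂ) (w s (n:ℤ))).re))
      = (fun s : ℝ => ∑ n ∈ Finset.range N, e * k0 * mu ^ ((n:ℤ)+1) *
        (2 * (w s ((n:ℤ)+2) * w s ((n:ℤ)+1) * (starRingEnd ℂ) (w s (n:ℤ))).re)) := by
    funext s
    refine tsum_eq_sum ?_
    intro n hn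
    simp only [Finset.mem_range, not_lt] at hn
    have hz : w s ((n:ℤ)+2) = 0 := hN s _ (by omega)
    simp [hz]
  have h0 : (∑ n ∈ Finset.range N, (e * k0 * mu ^ ((n:ℤ)+1) *
        (2 * ((d ((n:ℤ)+2) * w t ((n:ℤ)+1) + w t ((n:ℤ)+2) * d ((n:ℤ)+1)) * (starRingEnd ℂ) (w t (n:ℤ))
          + w t ((n:ℤ)+2) * w t ((n:ℤ)+1) * (starRingEnd ℂ) (d (n:ℤ))).re))) = 0 := by
    have step : ∀ n ∈ Finset.range N, (e * k0 * mu ^ ((n:ℤ)+1) *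
        (2 * ((d ((n:ℤ)+2) * w t ((n:ℤ)+1) + w t ((n:ℤ)+2) * d ((n:ℤ)+1)) * (starRingEnd ℂ) (w t (n:ℤ))
          + w t ((n:ℤ)+2) * w t ((n:ℤ)+1) * (starRingEnd ℂ) (d (n:ℤ))).re))
        = sabraG (w t) mu k0 e (n+1) - sabraG (w t) mu k0 e n := by
      intro n _
      rcases n with _ | m
      · have w0 : w t 0 = 0 := hb t 0 le_rfl
        have wm1 : w t (-1) = 0 := hb t (-1) (by norm_num)
        norm_num [sabraG, hd_def, w0, wm1]
      · simp only [hd_def]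
        rw [if_pos (show (1:ℤ) ≤ ((m+1:ℕ):ℤ)+2 by omega),
          if_pos (show (1:ℤ) ≤ ((m+1:ℕ):ℤ)+1 by omega),
          if_pos (show (1:ℤ) ≤ ((m+1:ℕ):ℤ) by omega)]
        exact sabra_key k0 e mu hmu0.ne' (w t) (m+1)
    rw [Finset.sum_congr rfl step, Finset.sum_range_sub (fun m => sabraG (w t) mu k0 e m)]
    have gN : sabraG (w t) mu k0 e N = 0 := by
      have z2 : w t ((N:ℤ)+2) = 0 := hN t _ (by omega)
      have z3 : w t ((N:ℤ)+3) = 0 := hN t _ (by omega)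
      simp [sabraG, z2, z3]
    have g0 : sabraG (w t) mu k0 e 0 = 0 := by
      have w0 : w t 0 = 0 := hb t 0 le_rfl
      have wm1 : w t (-1) = 0 := hb t (-1) (by norm_num)
      norm_num [sabraG, w0, wm1]
    rw [gN, g0, sub_zero]
  rw [hfun]
  exact h0 ▸ hsum
end

section
/- If λ² ≥ 1/ε with ε = (√5 − 1)/2, then the Hamiltonian H = Σ_n ε k₀ (λ√ε)^n (a_{n+1} a_n conj(a_{n−1}) + c.c.) is absolutely convergent (well-defined) for every u ∈ V = V₁, where a_n = ±u_n/ε^{n/2}. -/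
open Complex

set_option maxHeartbeats 1000000 in
/-- if `λ² ≥ 1/ε` with `ε = (√5 - 1)/2`, then the Hamiltonian
`H = ∑_n ε k₀ (λ√ε)^n (a_{n+1} a_n conj(a_{n-1}) + c.c.)`, where `a_n = ±u_n/ε^{n/2}`,
converges absolutely for every `u ∈ V = V₁`:
`∑_n ε k₀ (λ√ε)^n |a_{n+1}| |a_n| |a_{n-1}| < ∞`. -/
theorem sabra_hamiltonian_well_defined
    (k0 lam : ℝ) (hk0 : 0 < k0) (hlam : 1 < lam)
    (hlameps : (1 : ℝ) / ((Real.sqrt 5 - 1) / 2) ≤ lam ^ 2)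
    (u : ℤ → ℂ)
    (hb : ∀ n : ℤ, n ≤ 0 → u n = 0)
    (hV : Summable fun n : ℕ =>
      (kk k0 lam ((n : ℤ) + 1)) ^ 2 * ‖u ((n : ℤ) + 1)‖ ^ 2) :
    Summable fun n : ℕ =>
      ((Real.sqrt 5 - 1) / 2) * k0 *
        (lam * Real.sqrt ((Real.sqrt 5 - 1) / 2)) ^ ((n : ℤ) + 1) *
        ((‖u ((n : ℤ) + 2)‖ / (Real.sqrt ((Real.sqrt 5 - 1) / 2)) ^ ((n : ℤ) + 2)) *
          (‖u ((n : ℤ) + 1)‖ / (Real.sqrt ((Real.sqrt 5 - 1) / 2)) ^ ((n : ℤ) + 1)) *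
          (‖u (n : ℤ)‖ / (Real.sqrt ((Real.sqrt 5 - 1) / 2)) ^ (n : ℤ))) := by
  set eps : ℝ := (Real.sqrt 5 - 1) / 2 with heps
  have h5 : (2 : ℝ) < Real.sqrt 5 := by
    nlinarith [Real.sq_sqrt (by norm_num : (0:ℝ) ≤ 5), Real.sqrt_nonneg 5]
  have heps_pos : 0 < eps := by rw [heps]; linarith
  set s : ℝ := Real.sqrt eps with hsdef
  have hs_pos : 0 < s := Real.sqrt_pos.2 heps_pos
  have hs2 : s ^ 2 = eps := Real.sq_sqrt heps_pos.le
  have hs : s ≠ 0 := hs_pos.ne'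
  have hlam0 : 0 < lam := by linarith
  -- t := lam / eps ≤ lam ^ 3
  set t : ℝ := lam / s ^ 2 with htdef
  have ht_pos : 0 < t := by positivity
  have ht3 : t ≤ lam ^ 3 := by
    rw [htdef, hs2, div_le_iff₀ heps_pos]
    have : 1 / eps ≤ lam ^ 2 := hlameps
    rw [div_le_iff₀ heps_pos] at this
    nlinarith
  -- bound C with lam ^ m * ‖u m‖ ≤ C
  set T : ℝ := ∑' n : ℕ, (kk k0 lam ((n : ℤ) + 1)) ^ 2 * ‖u ((n : ℤ) + 1)‖ ^ 2 with hT
  have hT0 : 0 ≤ T := tsum_nonneg (fun n => by positivity)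
  set C : ℝ := Real.sqrt T / k0 with hC
  have hC0 : 0 ≤ C := by positivity
  have hbound : ∀ m : ℕ, lam ^ m * ‖u (m : ℤ)‖ ≤ C := by
    intro m
    match m with
    | 0 => simp [hb 0 le_rfl, hC0]
    | Nat.succ m =>
      have h1 : (kk k0 lam ((m : ℤ) + 1)) ^ 2 * ‖u ((m : ℤ) + 1)‖ ^ 2 ≤ T :=
        hV.le_tsum m (fun j _ => by positivity)
      have hkk : kk k0 lam ((m : ℤ) + 1) = k0 * lam ^ (m + 1) := by
        rw [kk, show ((m:ℤ)+1) = ((m+1 : ℕ) : ℤ) by push_cast; ring, zpow_natCast]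
      rw [hkk] at h1
      have h2 : (k0 * (lam ^ (m+1) * ‖u ((m : ℤ) + 1)‖)) ^ 2 ≤ Real.sqrt T ^ 2 := by
        rw [Real.sq_sqrt hT0]; nlinarith [norm_nonneg (u ((m:ℤ)+1))]
      have h3 : k0 * (lam ^ (m+1) * ‖u ((m : ℤ) + 1)‖) ≤ Real.sqrt T := by
        nlinarith [Real.sqrt_nonneg T, norm_nonneg (u ((m:ℤ)+1)), pow_pos hlam0 (m+1),
          mul_nonneg hk0.le (mul_nonneg (pow_pos hlam0 (m+1)).le (norm_nonneg (u ((m:ℤ)+1))))]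
      rw [hC, le_div_iff₀ hk0]
      calc lam ^ (m+1) * ‖u ((m:ℤ)+1)‖ * k0 = k0 * (lam ^ (m+1) * ‖u ((m:ℤ)+1)‖) := by ring
        _ ≤ Real.sqrt T := h3
  have hk0ne : k0 ≠ 0 := hk0.ne'
  -- summable majorant
  have hA : Summable (fun n : ℕ => lam ^ (2*(n+1)) * ‖u ((n:ℤ)+1)‖ ^ 2) := by
    apply (hV.mul_left (1 / k0 ^ 2)).congr
    intro n
    have hkk : kk k0 lam ((n : ℤ) + 1) = k0 * lam ^ (n + 1) := by
      rw [kk, show ((n:ℤ)+1) = ((n+1 : ℕ) : ℤ) by push_cast; ring, zpow_natCast]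
    rw [hkk]
    field_simp
    ring
  have hB : Summable (fun n : ℕ => lam ^ (2*(n+2)) * ‖u ((n:ℤ)+2)‖ ^ 2) := by
    apply ((summable_nat_add_iff 1).2 hA).congr
    intro n
    push_cast
    ring_nf
  set K : ℝ := eps * k0 * C * lam / 2 with hK
  apply Summable.of_nonneg_of_le (f := fun n : ℕ =>
      K * (lam ^ (2*(n+2)) * ‖u ((n:ℤ)+2)‖ ^ 2 + lam ^ (2*(n+1)) * ‖u ((n:ℤ)+1)‖ ^ 2))
    (fun n => by positivity) _ ((hB.add hA).mul_left K)
  intro n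
  set a : ℝ := ‖u ((n:ℤ)+2)‖ with ha
  set b : ℝ := ‖u ((n:ℤ)+1)‖ with hbb
  set c : ℝ := ‖u (n:ℤ)‖ with hc
  have ha0 : 0 ≤ a := norm_nonneg _
  have hb0 : 0 ≤ b := norm_nonneg _
  have hc0 : 0 ≤ c := norm_nonneg _
  set q : ℝ := lam ^ n with hq
  have hq0 : 0 < q := pow_pos hlam0 n
  have hrw : eps * k0 * (lam * s) ^ ((n:ℤ)+1) *
      (a / s ^ ((n:ℤ)+2) * (b / s ^ ((n:ℤ)+1)) * (c / s ^ (n:ℤ)))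
      = eps * k0 * ((lam / s ^ 2) ^ (n+1) * (a * b * c)) := by
    rw [show ((n:ℤ)+2) = ((n:ℤ)+1) + 1 by ring]
    rw [zpow_add₀ hs, zpow_add₀ hs ((n:ℤ)) 1, mul_zpow]
    rw [show ((n:ℤ)+1) = ((n+1 : ℕ) : ℤ) by push_cast; ring, zpow_natCast, zpow_natCast,
      zpow_natCast]
    rw [div_pow]
    field_simp
    ring
  rw [hrw, ← htdef]
  have hqc : q * c ≤ C := hbound n
  have htp : t ^ (n+1) ≤ q ^ 3 * lam ^ 3 := by
    calc t ^ (n+1) ≤ (lam ^ 3) ^ (n+1) := pow_le_pow_left₀ ht_pos.le ht3 (n+1)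
      _ = q ^ 3 * lam ^ 3 := by rw [hq]; ring
  have hAn : lam ^ (2*(n+1)) = (q * lam) ^ 2 := by rw [hq]; ring
  have hBn : lam ^ (2*(n+2)) = (q * lam ^ 2) ^ 2 := by rw [hq]; ring
  show eps * k0 * (t ^ (n + 1) * (a * b * c)) ≤ K * (lam ^ (2*(n+2)) * a^2 + lam ^ (2*(n+1)) * b^2)
  rw [hAn, hBn]
  have s1 : t ^ (n+1) * (a*b*c) ≤ q^3 * lam^3 * (a*b*c) :=
    mul_le_mul_of_nonneg_right htp (by positivity)
  have s3 : q^2 * lam^3 * (a*b) * (q*c) ≤ q^2 * lam^3 * (a*b) * C :=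
    mul_le_mul_of_nonneg_left hqc (by positivity)
  have s4 : a * b ≤ (a^2 + b^2)/2 := by nlinarith [sq_nonneg (a-b)]
  have s5 : q^2 * lam^3 * (a*b) * C ≤ q^2 * lam^3 * ((a^2+b^2)/2) * C := by
    apply mul_le_mul_of_nonneg_right _ hC0
    exact mul_le_mul_of_nonneg_left s4 (by positivity)
  have hl : lam^3 ≤ lam^5 := pow_le_pow_right₀ hlam.le (by norm_num)
  have key : eps * k0 * (q^2 * lam^3 * ((a^2+b^2)/2) * C) ≤
      K * ((q * lam^2)^2 * a^2 + (q * lam)^2 * b^2) := by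
    rw [hK]
    nlinarith [mul_nonneg (mul_nonneg (mul_nonneg (mul_nonneg heps_pos.le hk0.le) hC0)
      (sq_nonneg (q*a))) (sub_nonneg.2 hl)]
  calc eps * k0 * (t ^ (n+1) * (a*b*c)) ≤ eps * k0 * (q^3 * lam^3 * (a*b*c)) := by
        exact mul_le_mul_of_nonneg_left s1 (by positivity)
    _ = eps * k0 * (q^2 * lam^3 * (a*b) * (q*c)) := by ring
    _ ≤ eps * k0 * (q^2 * lam^3 * (a*b) * C) := mul_le_mul_of_nonneg_left s3 (by positivity)
    _ ≤ eps * k0 * (q^2 * lam^3 * ((a^2+b^2)/2) * C) :=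
        mul_le_mul_of_nonneg_left s5 (by positivity)
    _ ≤ K * ((q * lam^2)^2 * a^2 + (q * lam)^2 * b^2) := key
end
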